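/- arXiv:math/0106016 — 7 statements merged into one kernel-verified Lean document; each statement's English description precedes it below -/
import Mathlib

section
/- Let K be a field of characteristic zero. Let (n_1, …, n_r) and (m_1, …, m_t) be tuples of positive integers such that ∏_{i=1}^{r} E_{n_i}(x) = ∏_{j=1}^{t} E_{m_j}(x) holds for infinitely many elements x of K. Then r = t and, up to reordering, n_i = m_i for all i. -/
open Polynomial

/-- The fundamental functional equation for Dickson polynomials of the second kind:
`(y - y⁻¹) * E_k(y + y⁻¹) = y^(k+1) - y⁻¹^(k+1)`. -/
private lemma dickE {F : Type*} [Field F] (y : F) (hy : y ≠ 0) : ∀ k : ℕ,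
    (y - y⁻¹) * (aeval (y + y⁻¹) (dickson 2 (1 : ℤ) k)) = y ^ (k + 1) - y⁻¹ ^ (k + 1)
  | 0 => by
      norm_num [dickson_zero]
  | 1 => by
      simp [dickson_one]; ring
  | (k + 2) => by
      have h1 := dickE y hy k
      have h2 := dickE y hy (k + 1)
      have hyy : y * y⁻¹ = 1 := mul_inv_cancel₀ hy
      rw [dickson_add_two]
      simp only [map_sub, map_mul, aeval_X, map_one, one_mul]
      linear_combination (y + y⁻¹) * h2 - h1 + (y ^ (k + 1) - y⁻¹ ^ (k + 1)) * hyy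

private lemma dickson_ne_zero' (k : ℕ) : dickson 2 (1 : ℤ) k ≠ 0 := by
  intro h
  have h2 : (2 : ℝ) ≠ 0 := two_ne_zero
  have := dickE (2 : ℝ) h2 k
  rw [h] at this
  simp only [map_zero, mul_zero] at this
  have h1 : ((2 : ℝ)⁻¹) ^ (k + 1) < 1 := pow_lt_one₀ (by norm_num) (by norm_num) (Nat.succ_ne_zero k)
  have h3 : (1 : ℝ) < 2 ^ (k + 1) := one_lt_pow₀ (by norm_num) (Nat.succ_ne_zero k)
  linarith [this]

/-- For `N ≥ 1` there is a complex number which is a root of `E_N` but of no `E_k` with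
`k < N` (namely `2 cos (π / (N+1))`). -/
private lemma exists_root' (N : ℕ) (hN : 1 ≤ N) :
    ∃ x : ℂ, aeval x (dickson 2 (1 : ℤ) N) = 0 ∧
      ∀ k < N, aeval x (dickson 2 (1 : ℤ) k) ≠ 0 := by
  have hpos : 0 < 2 * (N + 1) := by positivity
  obtain ⟨ζ, hζ⟩ : ∃ ζ : ℂ, IsPrimitiveRoot ζ (2 * (N + 1)) :=
    ⟨_, Complex.isPrimitiveRoot_exp _ hpos.ne'⟩
  have hy : ζ ≠ 0 := hζ.ne_zero hpos.ne'
  have hsub : ζ - ζ⁻¹ ≠ 0 := by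
    intro h
    have h2 : ζ ^ 2 = 1 := by
      have hzz : ζ = ζ⁻¹ := by linear_combination h
      calc ζ ^ 2 = ζ * ζ := sq ζ
        _ = ζ * ζ⁻¹ := by rw [← hzz]
        _ = 1 := mul_inv_cancel₀ hy
    have hd := (hζ.pow_eq_one_iff_dvd 2).mp h2
    have := Nat.le_of_dvd (by norm_num) hd
    omega
  have hN1 : ζ ^ (N + 1) = -1 := by
    have h2 : ζ ^ (N + 1) * ζ ^ (N + 1) = 1 := by
      rw [← pow_add]
      have : N + 1 + (N + 1) = 2 * (N + 1) := by ring
      rw [this, hζ.pow_eq_one]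
    rcases mul_self_eq_one_iff.mp h2 with h | h
    · exfalso
      have hd := (hζ.pow_eq_one_iff_dvd (N + 1)).mp h
      have := Nat.le_of_dvd (by omega) hd
      omega
    · exact h
  refine ⟨ζ + ζ⁻¹, ?_, ?_⟩
  · have := dickE ζ hy N
    have hrhs : ζ ^ (N + 1) - ζ⁻¹ ^ (N + 1) = 0 := by
      rw [inv_pow, hN1]
      norm_num
    rw [hrhs] at this
    exact (mul_eq_zero.mp this).resolve_left hsub
  · intro k hk hzero
    have := dickE ζ hy k
    rw [hzero, mul_zero] at this
    have heq : ζ ^ (k + 1) = ζ⁻¹ ^ (k + 1) := by linear_combination -this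
    have h2 : ζ ^ (2 * (k + 1)) = 1 := by
      have : ζ ^ (2 * (k + 1)) = ζ ^ (k + 1) * ζ ^ (k + 1) := by
        rw [← pow_add]; ring_nf
      rw [this]; nth_rewrite 2 [heq]; rw [inv_pow]
      exact mul_inv_cancel₀ (pow_ne_zero _ hy)
    have hd := (hζ.pow_eq_one_iff_dvd _).mp h2
    have := Nat.le_of_dvd (by omega) hd
    omega

/-- The multiset of indices is determined by the product of the Dickson polynomials. -/
private lemma dickson_key :
    ∀ S T : Multiset ℕ, (∀ k ∈ S, 1 ≤ k) → (∀ k ∈ T, 1 ≤ k) →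
    (S.map (dickson 2 (1 : ℤ))).prod = (T.map (dickson 2 (1 : ℤ))).prod → S = T := by
  intro S
  induction S using Multiset.strongInductionOn with
  | ih S IH =>
  intro T hS hT h
  by_cases hS0 : S = 0
  · subst hS0
    by_contra hT0
    have hT0' : T ≠ 0 := fun hh => hT0 hh.symm
    obtain ⟨k, hk⟩ := Multiset.exists_mem_of_ne_zero hT0'
    obtain ⟨x, hx0, -⟩ := exists_root' k (hT k hk)
    have hv : aeval x ((T.map (dickson 2 (1 : ℤ))).prod) = 0 := by
      rw [map_multiset_prod, Multiset.map_map]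
      exact Multiset.prod_eq_zero (Multiset.mem_map.mpr ⟨k, hk, hx0⟩)
    rw [← h] at hv
    simp at hv
  · have hST : S + T ≠ 0 := by simp [hS0]
    have hne : (S + T).toFinset.Nonempty := by
      rw [Multiset.toFinset_nonempty]; exact hST
    set N := (S + T).toFinset.max' hne with hNdef
    have hNmem : N ∈ S + T := by
      have := (S + T).toFinset.max'_mem hne
      rwa [Multiset.mem_toFinset] at this
    have hmax : ∀ k ∈ S + T, k ≤ N := fun k hk =>
      (S + T).toFinset.le_max' k (Multiset.mem_toFinset.mpr hk)
    have hN1 : 1 ≤ N := by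
      rcases Multiset.mem_add.mp hNmem with hh | hh
      exacts [hS N hh, hT N hh]
    obtain ⟨x, hx0, hxne⟩ := exists_root' N hN1
    have extract : ∀ U : Multiset ℕ, (∀ k ∈ U, k ≤ N) →
        aeval x ((U.map (dickson 2 (1 : ℤ))).prod) = 0 → N ∈ U := by
      intro U hU hv
      rw [map_multiset_prod, Multiset.map_map] at hv
      obtain ⟨k, hkU, hk0⟩ := Multiset.mem_map.mp (Multiset.prod_eq_zero_iff.mp hv)
      have hkN : k = N := by
        by_contra hne'
        exact hxne k (lt_of_le_of_ne (hU k hkU) hne') hk0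
      rwa [hkN] at hkU
    have hvan : aeval x ((S.map (dickson 2 (1 : ℤ))).prod) = 0 := by
      rcases Multiset.mem_add.mp hNmem with hh | hh
      · rw [map_multiset_prod, Multiset.map_map]
        exact Multiset.prod_eq_zero (Multiset.mem_map.mpr ⟨N, hh, hx0⟩)
      · rw [h, map_multiset_prod, Multiset.map_map]
        exact Multiset.prod_eq_zero (Multiset.mem_map.mpr ⟨N, hh, hx0⟩)
    have hmemS : N ∈ S := extract S (fun k hk => hmax k (Multiset.mem_add.mpr (Or.inl hk))) hvan
    have hmemT : N ∈ T := extract T (fun k hk => hmax k (Multiset.mem_add.mpr (Or.inr hk)))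
      (by rw [← h]; exact hvan)
    rw [← Multiset.cons_erase hmemS, ← Multiset.cons_erase hmemT, Multiset.map_cons,
      Multiset.map_cons, Multiset.prod_cons, Multiset.prod_cons] at h
    have h' := mul_left_cancel₀ (dickson_ne_zero' N) h
    have heq := IH (S.erase N) (Multiset.erase_lt.mpr hmemS) (T.erase N)
      (fun k hk => hS k (Multiset.mem_of_mem_erase hk))
      (fun k hk => hT k (Multiset.mem_of_mem_erase hk)) h'
    rw [← Multiset.cons_erase hmemS, ← Multiset.cons_erase hmemT, heq]

/-- **Wong, Lemma 9.**  Let `K` be a field of characteristic zero, and let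
`(n 1, …, n r)` and `(m 1, …, m t)` be tuples of positive integers such that
`∏ i, E_{n i}(x) = ∏ j, E_{m j}(x)` for infinitely many `x ∈ K`, where `E_k` denotes the
degree-`k` Dickson polynomial of the second kind with parameter `1` (so `E_k(trace s)` is
the trace of the `k`-th symmetric power of `s ∈ SL_2`).  Then `r = t` and, up to
reordering, `n i = m i` for all `i`. -/
theorem dickson_prod_eq_infinite (K : Type*) [Field K] [CharZero K]
    (r t : ℕ) (n : Fin r → ℕ) (m : Fin t → ℕ)
    (hn : ∀ i, 1 ≤ n i) (hm : ∀ j, 1 ≤ m j)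
    (h : {x : K |
        (∏ i, Polynomial.aeval x (Polynomial.dickson 2 (1 : ℤ) (n i))) =
        (∏ j, Polynomial.aeval x (Polynomial.dickson 2 (1 : ℤ) (m j)))}.Infinite) :
    r = t ∧ ∃ σ : Fin r ≃ Fin t, ∀ i, n i = m (σ i) := by
  set P : ℤ[X] := ∏ i, dickson 2 (1 : ℤ) (n i) with hP
  set Q : ℤ[X] := ∏ j, dickson 2 (1 : ℤ) (m j) with hQ
  have hinj : Function.Injective (algebraMap ℤ K) := fun a b hab => by
    simpa using hab
  have hPQ : P = Q := by
    have hD : (P - Q).map (algebraMap ℤ K) = 0 := by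
      apply Polynomial.eq_zero_of_infinite_isRoot
      apply h.mono
      intro x hx
      simp only [Set.mem_setOf_eq] at hx
      simp only [Set.mem_setOf_eq, IsRoot, eval_map, ← aeval_def, map_sub, hP, hQ,
        map_prod]
      rw [hx, sub_self]
    have h0 := Polynomial.map_injective (algebraMap ℤ K) hinj
      (hD.trans (Polynomial.map_zero _).symm)
    exact sub_eq_zero.mp h0
  have hmult : Multiset.map n Finset.univ.val = Multiset.map m Finset.univ.val := by
    apply dickson_key
    · intro k hk
      obtain ⟨i, -, rfl⟩ := Multiset.mem_map.mp hk
      exact hn i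
    · intro k hk
      obtain ⟨j, -, rfl⟩ := Multiset.mem_map.mp hk
      exact hm j
    · rw [Multiset.map_map, Multiset.map_map]
      rw [hP, hQ] at hPQ
      rw [← Finset.prod_eq_multiset_prod, ← Finset.prod_eq_multiset_prod]
      exact hPQ
  have hrt : r = t := by
    have := congrArg Multiset.card hmult
    simpa using this
  subst hrt
  refine ⟨rfl, ?_⟩
  have hperm : (List.ofFn n).Perm (List.ofFn m) := by
    rw [← Multiset.coe_eq_coe]
    rw [← Fin.univ_val_map, ← Fin.univ_val_map]
    exact hmult
  have hsorted : n ∘ Tuple.sort n = m ∘ Tuple.sort m := by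
    apply List.ofFn_injective
    refine (fun hp h1 h2 => List.Perm.eq_of_sortedLE h1 h2 hp) ?_ ?_ ?_
    · exact ((Tuple.sort n).ofFn_comp_perm n).trans
        (hperm.trans ((Tuple.sort m).ofFn_comp_perm m).symm)
    · exact (Tuple.monotone_sort n).sortedLE_ofFn
    · exact (Tuple.monotone_sort m).sortedLE_ofFn
  refine ⟨(Tuple.sort n).symm.trans (Tuple.sort m), fun i => ?_⟩
  have := congrFun hsorted ((Tuple.sort n).symm i)
  simpa using this
end

section
/- For every integer n > 1 there exists a constant c_1(n) > 0 such that for every prime l, every finite-dimensional complex irreducible representation of SL_n(ℤ/lℤ) whose image is a non-abelian group has degree strictly greater than c_1(n) · l. -/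
open Matrix Polynomial

namespace WongLemma10

variable {ι : Type*} [Fintype ι] [DecidableEq ι] {F : Type*} [Field F]

/-- diagonal matrix with `e` at `i`, `e⁻¹` at `j`, `1` elsewhere -/
def dgm (i j : ι) (e : F) : Matrix ι ι F :=
  diagonal (fun k => if k = i then e else if k = j then e⁻¹ else 1)

lemma dgm_mul_dgm {i j : ι} (hij : i ≠ j) {e : F} (he : e ≠ 0) :
    dgm i j e * dgm i j e⁻¹ = 1 := by
  rw [dgm, dgm, diagonal_mul_diagonal]
  ext x y
  by_cases hxy : x = y
  · subst hxy
    by_cases hxi : x = i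
    · subst hxi; simp [hij, mul_inv_cancel₀ he]
    · by_cases hxj : x = j
      · subst hxj; simp [hxi, inv_inv, inv_mul_cancel₀ he]
      · simp [hxi, hxj]
  · simp [diagonal_apply_ne _ hxy, one_apply_ne hxy]

lemma det_dgm {i j : ι} (hij : i ≠ j) {e : F} (he : e ≠ 0) :
    det (dgm i j e) = 1 := by
  rw [dgm, det_diagonal]
  rw [← Finset.mul_prod_erase Finset.univ _ (Finset.mem_univ i),
    ← Finset.mul_prod_erase _ _ (Finset.mem_erase.2 ⟨Ne.symm hij, Finset.mem_univ j⟩)]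
  rw [if_pos rfl, if_neg (Ne.symm hij), if_pos rfl]
  rw [Finset.prod_eq_one]
  · field_simp
  · intro k hk
    simp only [Finset.mem_erase] at hk
    simp [hk.1, hk.2.1]

lemma dgm_mul_transvection {i j : ι} (hij : i ≠ j) {e : F} (he : e ≠ 0) (a : F) :
    dgm i j e * transvection i j a = transvection i j (e * e * a) * dgm i j e := by
  ext x y
  rw [dgm, diagonal_mul, mul_diagonal]
  simp only [transvection, Matrix.add_apply, one_apply, single, of_apply]
  by_cases hxy : x = y
  · subst hxy
    have h1 : ¬(i = x ∧ j = x) := fun h => hij (h.1.trans h.2.symm)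
    simp [h1]
  · by_cases hx : i = x
    · by_cases hy : j = y
      · subst hx; subst hy
        simp only [if_neg hxy, and_self, if_pos rfl, true_and, if_true,
          if_neg (Ne.symm hij)]
        field_simp
        ring
      · simp [hxy, hy, fun h : i = x ∧ j = y => hy h.2]
    · simp [hxy, hx, fun h : i = x ∧ j = y => hx h.1]

lemma transvection_apply' (i j x y : ι) (c : F) :
    transvection i j c x y = (if x = y then 1 else 0) + (if i = x ∧ j = y then c else 0) := by
  simp [transvection, single, one_apply, of_apply]

lemma transvection_prod_eq_dgm {i j : ι} (hij : i ≠ j) {e : F} (he : e ≠ 0) :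
    transvection i j e * transvection j i (-e⁻¹) * transvection i j e *
    transvection i j (-1) * transvection j i 1 * transvection i j (-1) = dgm i j e := by
  ext x y
  by_cases hxi : x = i <;> by_cases hxj : x = j <;> by_cases hyi : y = i <;>
      by_cases hyj : y = j <;>
    simp_all [transvection_apply', dgm, diagonal_apply, Ne.symm hij, eq_comm] <;>
    field_simp <;> ring

/-- build an element of `SL` -/
def mkSL (A : Matrix ι ι F) (h : det A = 1) : Matrix.SpecialLinearGroup ι F := ⟨A, h⟩

/-- transvection as an element of the special linear group -/
def tvSL (i j : ι) (hij : i ≠ j) (c : F) : Matrix.SpecialLinearGroup ι F :=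
  ⟨transvection i j c, det_transvection_of_ne i j hij c⟩

lemma tvSL_pow (i j : ι) (hij : i ≠ j) (k : ℕ) :
    tvSL i j hij (1 : F) ^ k = tvSL i j hij (k : F) := by
  induction k with
  | zero =>
      rw [pow_zero, Nat.cast_zero]
      exact Subtype.ext (transvection_zero i j).symm
  | succ k ih =>
      rw [pow_succ, ih]
      refine Subtype.ext ?_
      show transvection i j (k : F) * transvection i j 1 = transvection i j ((k + 1 : ℕ) : F)
      rw [transvection_mul_transvection_same _ _ hij]
      norm_cast

section Gen

variable (K : Subgroup (Matrix.SpecialLinearGroup ι F))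
  (hT : ∀ (i j : ι) (hij : i ≠ j) (c : F), tvSL i j hij c ∈ K)

include hT

lemma list_prod_mem' (L : List (TransvectionStruct ι F)) :
    mkSL (L.map TransvectionStruct.toMatrix).prod (by simp) ∈ K := by
  induction L with
  | nil =>
      have : mkSL (([] : List (TransvectionStruct ι F)).map TransvectionStruct.toMatrix).prod
          (by simp) = (1 : Matrix.SpecialLinearGroup ι F) := Subtype.ext rfl
      rw [this]; exact K.one_mem
  | cons t L ih =>
      have : mkSL ((t :: L).map TransvectionStruct.toMatrix).prod (by simp) =
          tvSL t.i t.j t.hij t.c *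
            mkSL (L.map TransvectionStruct.toMatrix).prod (by simp) := Subtype.ext rfl
      rw [this]
      exact K.mul_mem (hT _ _ _ _) ih

lemma diag_mem : ∀ (s : Finset ι) (D : ι → F), (∀ k ∉ s, D k = 1) →
    ∀ (hD : det (diagonal D) = 1),
    mkSL (diagonal D) hD ∈ K := by
  intro s
  induction s using Finset.strongInduction with
  | _ s ih =>
    intro D hsupp hD
    by_cases hcard : s.card ≤ 1
    · have hall : ∀ k, D k = 1 := by
        intro k
        by_cases hk : k ∈ s
        · have h1 : ∀ b ∈ Finset.univ, b ≠ k → D b = 1 := by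
            intro b _ hbk
            by_cases hb : b ∈ s
            · exact absurd (Finset.card_le_one.mp hcard b hb k hk) hbk
            · exact hsupp b hb
          have := Finset.prod_eq_single k h1 (fun h => absurd (Finset.mem_univ k) h)
          rw [det_diagonal, this] at hD
          exact hD
        · exact hsupp k hk
      have hDe : diagonal D = 1 := by
        have : D = fun _ => 1 := funext hall
        rw [this, diagonal_one]
      have : mkSL (diagonal D) hD = (1 : Matrix.SpecialLinearGroup ι F) := Subtype.ext hDe
      rw [this]; exact K.one_mem
    · obtain ⟨i, hi, j, hj, hijne⟩ := Finset.one_lt_card.mp (lt_of_not_ge hcard)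
      have hDne : ∀ k, D k ≠ 0 := by
        rw [det_diagonal] at hD
        intro k hk
        have := Finset.prod_eq_zero (Finset.mem_univ k) hk
        rw [hD] at this
        exact one_ne_zero this
      set e := D i with he_def
      have he : e ≠ 0 := hDne i
      set D' := Function.update (Function.update D i 1) j (e * D j) with hD'def
      have hD'i : D' i = 1 := by
        rw [hD'def, Function.update_of_ne hijne, Function.update_self]
      have hD'j : D' j = e * D j := by rw [hD'def, Function.update_self]
      have hD'k : ∀ k, k ≠ i → k ≠ j → D' k = D k := by
        intro k hki hkj
        rw [hD'def, Function.update_of_ne hkj, Function.update_of_ne hki]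
      have key : diagonal D = dgm i j e * diagonal D' := by
        rw [dgm, diagonal_mul_diagonal]
        refine congrArg diagonal (funext fun k => ?_)
        show D k = (if k = i then e else if k = j then e⁻¹ else 1) * D' k
        by_cases hki : k = i
        · subst hki; rw [if_pos rfl, hD'i, mul_one]
        · by_cases hkj : k = j
          · subst hkj
            rw [if_neg hki, if_pos rfl, hD'j, ← mul_assoc, inv_mul_cancel₀ he, one_mul]
          · rw [if_neg hki, if_neg hkj, hD'k k hki hkj, one_mul]
      have hdetdgm : det (dgm i j e) = 1 := det_dgm hijne he
      have hD' : det (diagonal D') = 1 := by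
        have h2 := congrArg det key
        rw [det_mul, hdetdgm, hD, one_mul] at h2
        exact h2.symm
      have hsupp' : ∀ k ∉ s.erase i, D' k = 1 := by
        intro k hk
        by_cases hki : k = i
        · subst hki; exact hD'i
        · have hks : k ∉ s := by
            intro hks
            exact hk (Finset.mem_erase.mpr ⟨hki, hks⟩)
          have hkj : k ≠ j := fun h => hks (h ▸ hj)
          rw [hD'k k hki hkj]
          exact hsupp k hks
      have hmem' := ih (s.erase i) (Finset.erase_ssubset hi) D' hsupp' hD'
      have hdgm_mem : mkSL (dgm i j e) hdetdgm ∈ K := by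
        have heq : mkSL (dgm i j e) hdetdgm =
            tvSL i j hijne e * tvSL j i hijne.symm (-e⁻¹) * tvSL i j hijne e *
            tvSL i j hijne (-1) * tvSL j i hijne.symm 1 * tvSL i j hijne (-1) :=
          Subtype.ext (by
            show dgm i j e = _
            rw [← transvection_prod_eq_dgm hijne he]
            rfl)
        rw [heq]
        exact K.mul_mem (K.mul_mem (K.mul_mem (K.mul_mem (K.mul_mem
          (hT _ _ _ _) (hT _ _ _ _)) (hT _ _ _ _)) (hT _ _ _ _)) (hT _ _ _ _)) (hT _ _ _ _)
      have : mkSL (diagonal D) hD = mkSL (dgm i j e) hdetdgm * mkSL (diagonal D') hD' :=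
        Subtype.ext key
      rw [this]
      exact K.mul_mem hdgm_mem hmem'

lemma K_eq_top (g : Matrix.SpecialLinearGroup ι F) : g ∈ K := by
  obtain ⟨L, L', D, h⟩ := Pivot.exists_list_transvec_mul_diagonal_mul_list_transvec (g.1)
  have hdetD : det (diagonal D) = 1 := by
    have h2 := congrArg det h
    rw [g.2, det_mul, det_mul] at h2
    simp only [TransvectionStruct.det_toMatrix_prod, one_mul, mul_one] at h2
    exact h2.symm
  have : g = mkSL (L.map TransvectionStruct.toMatrix).prod (by simp) *
        mkSL (diagonal D) hdetD *
        mkSL (L'.map TransvectionStruct.toMatrix).prod (by simp) :=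
    Subtype.ext h
  rw [this]
  exact K.mul_mem (K.mul_mem (list_prod_mem' K hT L)
    (diag_mem K hT Finset.univ D (fun k hk => absurd (Finset.mem_univ k) hk) hdetD))
    (list_prod_mem' K hT L')

end Gen

lemma exists_nontrivial_eigenvalue {V : Type} [AddCommGroup V] [Module ℂ V]
    [FiniteDimensional ℂ V] {l : ℕ} (hl : l.Prime) (f : Module.End ℂ V)
    (hfl : f ^ l = 1) (hf : f ≠ 1) :
    ∃ μ : ℂ, μ ^ l = 1 ∧ μ ≠ 1 ∧ f.HasEigenvalue μ := by
  by_contra hcon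
  push_neg at hcon
  have hζ : IsPrimitiveRoot (Complex.exp (2 * Real.pi * Complex.I / l)) l :=
    Complex.isPrimitiveRoot_exp l hl.ne_zero
  have h1mem : (1 : ℂ) ∈ nthRootsFinset l (1 : ℂ) := one_mem_nthRootsFinset hl.pos
  have key : (X : ℂ[X]) ^ l - 1 =
      (X - C 1) * ∏ μ ∈ (nthRootsFinset l (1 : ℂ)).erase 1, (X - C μ) := by
    rw [X_pow_sub_one_eq_prod hl.pos hζ, ← Finset.mul_prod_erase _ _ h1mem]
  have happ := congrArg (aeval f) key
  rw [_root_.map_sub, _root_.map_pow, aeval_X, _root_.map_one, hfl, sub_self, _root_.map_mul, _root_.map_sub, aeval_X,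
    aeval_C, _root_.map_one] at happ
  have hunit : IsUnit (aeval f (∏ μ ∈ (nthRootsFinset l (1 : ℂ)).erase 1, (X - C μ))) := by
    refine Finset.prod_induction _ (fun q => IsUnit (aeval f q))
      (fun a b ha hb => by rw [_root_.map_mul]; exact ha.mul hb) (by simp) ?_
    intro μ hμ
    obtain ⟨hμ1, hμl⟩ := Finset.mem_erase.mp hμ
    have hμroot : μ ^ l = 1 := (mem_nthRootsFinset hl.pos _).mp hμl
    have hnev : ¬ f.HasEigenvalue μ := hcon μ hμroot hμ1
    rw [Module.End.hasEigenvalue_iff_mem_spectrum, spectrum.notMem_iff] at hnev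
    rw [_root_.map_sub, aeval_X, aeval_C]
    simpa using hnev.neg
  have hf1 : f - 1 = 0 :=
    hunit.mul_right_cancel (by rw [zero_mul]; exact happ.symm)
  exact hf (sub_eq_zero.mp hf1)

end WongLemma10

/-- **Wong, Lemma 10 for `SL_n`.**  For every integer `n > 1` there is a constant
`c₁(n) > 0` such that for every prime `l`, every finite-dimensional complex irreducible
representation of `SL_n(ℤ/lℤ)` with non-abelian image has degree `> c₁(n) · l`. -/
theorem min_degree_nonabelian_irrep_SL (n : ℕ) (hn : 1 < n) :
    ∃ c : ℝ, 0 < c ∧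
      ∀ (l : ℕ), Nat.Prime l →
      ∀ (V : Type) [AddCommGroup V] [Module ℂ V] [FiniteDimensional ℂ V]
        (ρ : Representation ℂ (Matrix.SpecialLinearGroup (Fin n) (ZMod l)) V),
        -- `ρ` is irreducible:
        (∀ W : Submodule ℂ V,
          (∀ (g : Matrix.SpecialLinearGroup (Fin n) (ZMod l)), ∀ w ∈ W, ρ g w ∈ W) →
          W = ⊥ ∨ W = ⊤) →
        -- the image of `ρ` is non-abelian:
        (∃ g h : Matrix.SpecialLinearGroup (Fin n) (ZMod l), ρ g * ρ h ≠ ρ h * ρ g) →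
        c * l < (Module.finrank ℂ V : ℝ) := by
  classical
  refine ⟨1/4, by norm_num, ?_⟩
  intro l hl V _ _ _ ρ _hirr hnab
  haveI : Fact (Nat.Prime l) := ⟨hl⟩
  haveI : NeZero l := ⟨hl.ne_zero⟩
  -- Step 1: some transvection has nontrivial image
  have hex : ∃ (i j : Fin n) (hij : i ≠ j), ρ (WongLemma10.tvSL i j hij 1) ≠ 1 := by
    by_contra hcon
    push_neg at hcon
    have hall : ∀ (i j : Fin n) (hij : i ≠ j) (c : ZMod l),
        WongLemma10.tvSL i j hij c ∈ (Representation.asGroupHom ρ).ker := by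
      intro i j hij c
      have h1 : ρ (WongLemma10.tvSL i j hij 1) = 1 := hcon i j hij
      have h2 : ρ (WongLemma10.tvSL i j hij c) = 1 := by
        have hc : WongLemma10.tvSL i j hij c = WongLemma10.tvSL i j hij 1 ^ c.val := by
          rw [WongLemma10.tvSL_pow, ZMod.natCast_rightInverse c]
        rw [hc, map_pow, h1, one_pow]
      rw [MonoidHom.mem_ker]
      exact Units.ext (by rw [Representation.asGroupHom_apply, h2, Units.val_one])
    obtain ⟨g0, h0, hnc⟩ := hnab
    have himg : ∀ g : Matrix.SpecialLinearGroup (Fin n) (ZMod l), ρ g = 1 := by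
      intro g
      have hmem := WongLemma10.K_eq_top _ hall g
      rw [MonoidHom.mem_ker] at hmem
      rw [← Representation.asGroupHom_apply, hmem, Units.val_one]
    exact hnc (by rw [himg g0, himg h0])
  obtain ⟨i, j, hij, hf⟩ := hex
  set f : Module.End ℂ V := ρ (WongLemma10.tvSL i j hij 1) with hfdef
  have hfl : f ^ l = 1 := by
    rw [hfdef, ← map_pow, WongLemma10.tvSL_pow, ZMod.natCast_self]
    have h0 : WongLemma10.tvSL i j hij (0 : ZMod l) = 1 :=
      Subtype.ext (Matrix.transvection_zero i j)
    rw [h0, _root_.map_one]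
  obtain ⟨μ, hμl, hμ1, hμeig⟩ := WongLemma10.exists_nontrivial_eigenvalue hl f hfl hf
  have hord : orderOf μ = l := orderOf_eq_prime hμl hμ1
  have hprim : IsPrimitiveRoot μ l := hord ▸ IsPrimitiveRoot.orderOf μ
  -- Step 2: conjugation by diagonal matrices gives more eigenvalues
  have conj : ∀ d : (ZMod l)ˣ,
      f.HasEigenvalue (μ ^ ((d : ZMod l) * (d : ZMod l)).val) := by
    intro d
    obtain ⟨v, hv⟩ := hμeig.exists_hasEigenvector
    have hd0 : (d : ZMod l) ≠ 0 := d.ne_zero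
    set t : Matrix.SpecialLinearGroup (Fin n) (ZMod l) :=
      WongLemma10.mkSL (WongLemma10.dgm i j (d : ZMod l))
        (WongLemma10.det_dgm hij hd0) with htdef
    set tinv : Matrix.SpecialLinearGroup (Fin n) (ZMod l) :=
      WongLemma10.mkSL (WongLemma10.dgm i j ((d : ZMod l))⁻¹)
        (WongLemma10.det_dgm hij (inv_ne_zero hd0)) with htinvdef
    have htt : t * tinv = 1 := Subtype.ext (WongLemma10.dgm_mul_dgm hij hd0)
    have htinv : tinv = t⁻¹ := eq_inv_of_mul_eq_one_right htt
    have hrel : t * WongLemma10.tvSL i j hij 1 =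
        WongLemma10.tvSL i j hij ((d : ZMod l) * (d : ZMod l)) * t :=
      Subtype.ext (by
        show WongLemma10.dgm i j (d : ZMod l) * Matrix.transvection i j 1 = _
        rw [WongLemma10.dgm_mul_transvection hij hd0 1, mul_one]
        rfl)
    have hT2 : WongLemma10.tvSL i j hij ((d : ZMod l) * (d : ZMod l)) =
        t * WongLemma10.tvSL i j hij 1 * t⁻¹ := by
      rw [eq_mul_inv_iff_mul_eq]
      exact hrel.symm
    have hrel2 : WongLemma10.tvSL i j hij 1 * t⁻¹ =
        t⁻¹ * WongLemma10.tvSL i j hij ((d : ZMod l) * (d : ZMod l)) := by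
      rw [hT2]
      group
    have e2 : ρ (WongLemma10.tvSL i j hij ((d : ZMod l) * (d : ZMod l))) v
        = μ ^ ((d : ZMod l) * (d : ZMod l)).val • v := by
      have hc : WongLemma10.tvSL i j hij ((d : ZMod l) * (d : ZMod l)) =
          WongLemma10.tvSL i j hij 1 ^ ((d : ZMod l) * (d : ZMod l)).val := by
        rw [WongLemma10.tvSL_pow, ZMod.natCast_rightInverse]
      rw [hc, map_pow, ← hfdef]
      exact hv.pow_apply _
    have key : f (ρ t⁻¹ v) = ρ t⁻¹ (ρ (WongLemma10.tvSL i j hij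
        ((d : ZMod l) * (d : ZMod l))) v) := by
      have hk := congrArg (fun g => ρ g v) hrel2
      simpa [_root_.map_mul, Module.End.mul_apply, hfdef] using hk
    rw [e2, _root_.map_smul] at key
    have hw0 : ρ t⁻¹ v ≠ 0 := by
      intro hzero
      have hv0 := congrArg (ρ t) hzero
      rw [map_zero, ← Module.End.mul_apply, ← _root_.map_mul, mul_inv_cancel,
        _root_.map_one, Module.End.one_apply] at hv0
      exact hv.right hv0
    exact Module.End.hasEigenvalue_of_hasEigenvector
      ⟨Module.End.mem_eigenspace_iff.mpr key, hw0⟩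
  -- Step 3: counting
  set S : Finset (ZMod l) :=
    Finset.univ.image (fun d : (ZMod l)ˣ => (d : ZMod l) * (d : ZMod l)) with hSdef
  have hfib : ∀ b ∈ Finset.univ.image
        (fun d : (ZMod l)ˣ => (d : ZMod l) * (d : ZMod l)),
      (Finset.univ.filter fun d : (ZMod l)ˣ =>
        (d : ZMod l) * (d : ZMod l) = b).card ≤ 2 := by
    intro b hbmem
    obtain ⟨a, -, rfl⟩ := Finset.mem_image.mp hbmem
    have hsub : (Finset.univ.filter fun d : (ZMod l)ˣ =>
        (d : ZMod l) * (d : ZMod l) = (a : ZMod l) * (a : ZMod l)) ⊆ {a, -a} := by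
      intro d hd
      rw [Finset.mem_filter] at hd
      have h2 : ((d : ZMod l) - a) * ((d : ZMod l) + a) = 0 := by
        linear_combination hd.2
      rcases mul_eq_zero.mp h2 with h | h
      · have : d = a := Units.ext (sub_eq_zero.mp h)
        simp [this]
      · have : d = -a := Units.ext (by
          rw [Units.val_neg]; exact eq_neg_of_add_eq_zero_left h)
        simp [this]
    exact (Finset.card_le_card hsub).trans
      ((Finset.card_insert_le _ _).trans (by simp))
  have hcount : l - 1 ≤ 2 * S.card := by
    have hc := Finset.card_le_mul_card_image
      (f := fun d : (ZMod l)ˣ => (d : ZMod l) * (d : ZMod l))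
      (Finset.univ : Finset (ZMod l)ˣ) 2 hfib
    rwa [Finset.card_univ, ZMod.card_units l] at hc
  have hS1 : 1 ≤ S.card :=
    Finset.card_pos.mpr ⟨1, Finset.mem_image.mpr ⟨1, Finset.mem_univ 1, by simp⟩⟩
  -- Step 4: linear independence of eigenvectors
  have hSfr : S.card ≤ Module.finrank ℂ V := by
    have hinj : Function.Injective (fun b : ↥S => μ ^ (b : ZMod l).val) := by
      intro a b h
      exact Subtype.ext (ZMod.val_injective l
        (hprim.pow_inj (ZMod.val_lt _) (ZMod.val_lt _) h))
    have hex2 : ∀ b : ↥S, ∃ w : V, f.HasEigenvector (μ ^ (b : ZMod l).val) w := by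
      intro b
      have hb : (b : ZMod l) ∈ Finset.univ.image
          (fun d : (ZMod l)ˣ => (d : ZMod l) * (d : ZMod l)) := by
        rw [← hSdef]; exact b.2
      obtain ⟨d, -, hd⟩ := Finset.mem_image.mp hb
      have hce := conj d
      rw [hd] at hce
      exact hce.exists_hasEigenvector
    choose xs hxs using hex2
    have li := Module.End.eigenvectors_linearIndependent' f
      (fun b : ↥S => μ ^ (b : ZMod l).val) hinj xs hxs
    have hcard := li.fintype_card_le_finrank
    rwa [Fintype.card_coe] at hcard
  -- Step 5: arithmetic
  have hl2 : 2 ≤ l := hl.two_le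
  have hnat : l < 4 * Module.finrank ℂ V := by omega
  have hreal : (l : ℝ) < 4 * (Module.finrank ℂ V : ℝ) := by exact_mod_cast hnat
  linarith
end

section
/- For every integer n > 1 there exists a constant c_1(n) > 0 such that for every prime l, every finite-dimensional complex irreducible representation of GL_n(ℤ/lℤ) whose image is a non-abelian group has degree strictly greater than c_1(n) · l. -/
open Matrix

section Aux

variable {n : Type*} [Fintype n] [DecidableEq n] {R : Type*} [Field R]

private theorem diag_conj_transvection' (i j : n) (hij : i ≠ j) (a c : R) (ha : a ≠ 0) :
    Matrix.diagonal (Function.update (fun _ => (1:R)) i a) * Matrix.transvection i j c *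
      Matrix.diagonal (Function.update (fun _ => (1:R)) i a⁻¹) =
    Matrix.transvection i j (a * c) := by
  ext x y
  rw [Matrix.mul_diagonal, Matrix.diagonal_mul]
  simp only [Matrix.transvection, Matrix.add_apply, Matrix.one_apply, Matrix.single,
    Matrix.of_apply, Function.update_apply]
  by_cases hx : x = i <;> by_cases hy : y = i <;> by_cases h : x = y <;>
    simp_all [mul_add, mul_assoc, mul_inv_cancel₀ ha, eq_comm]

private theorem diag_mul_diag_inv' (i : n) (a : R) (ha : a ≠ 0) :
    Matrix.diagonal (Function.update (fun _ => (1:R)) i a) *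
      Matrix.diagonal (Function.update (fun _ => (1:R)) i a⁻¹) = 1 := by
  ext x y
  by_cases hxy : x = y <;> by_cases hx : x = i <;>
    simp_all [Matrix.diagonal_mul_diagonal, Matrix.diagonal_apply, Matrix.one_apply,
      Function.update_apply, mul_inv_cancel₀ ha]

private theorem transvection_pow' (i j : n) (hij : i ≠ j) (c : R) (k : ℕ) :
    Matrix.transvection i j c ^ k = Matrix.transvection i j (k • c) := by
  induction k with
  | zero => simp
  | succ m ih =>
      rw [pow_succ, ih, Matrix.transvection_mul_transvection_same _ _ hij, succ_nsmul]

/-- If a homomorphism from `GL n F` kills every transvection, then its image is commutative,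
because every invertible matrix is a product of transvections and a diagonal matrix. -/
private theorem comm_of_transvection_trivial' {F : Type*} [Field F] {n : Type*} [Fintype n]
    [DecidableEq n] {M : Type*} [Monoid M] (ρ : GL n F →* M)
    (htriv : ∀ t : Matrix.TransvectionStruct n F, ∀ g : GL n F,
      (↑g : Matrix n n F) = t.toMatrix → ρ g = 1) :
    ∀ g h : GL n F, ρ g * ρ h = ρ h * ρ g := by
  have detne : ∀ g : GL n F, (↑g : Matrix n n F).det ≠ 0 := fun g =>
    isUnit_iff_ne_zero.mp ((Matrix.isUnit_iff_isUnit_det _).mp g.isUnit)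
  have key : ∀ A : Matrix n n F, A.det ≠ 0 → ∀ g : GL n F, (↑g : Matrix n n F) = A →
      ∃ u : GL n F, (∃ d, (↑u : Matrix n n F) = Matrix.diagonal d) ∧ ρ g = ρ u := by
    intro A hA
    refine Matrix.diagonal_transvection_induction_of_det_ne_zero
      (fun A => ∀ g : GL n F, (↑g : Matrix n n F) = A →
        ∃ u : GL n F, (∃ d, (↑u : Matrix n n F) = Matrix.diagonal d) ∧ ρ g = ρ u) A hA ?_ ?_ ?_
    · intro D _ g hg
      exact ⟨g, ⟨D, hg⟩, rfl⟩
    · intro t g hg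
      refine ⟨1, ⟨fun _ => 1, by simp⟩, ?_⟩
      rw [htriv t g hg, _root_.map_one ρ]
    · intro A B hA hB PA PB g hg
      obtain ⟨uA, huA⟩ := (Matrix.isUnit_iff_isUnit_det A).mpr (isUnit_iff_ne_zero.mpr hA)
      obtain ⟨uB, huB⟩ := (Matrix.isUnit_iff_isUnit_det B).mpr (isUnit_iff_ne_zero.mpr hB)
      have hguAB : g = uA * uB := Units.ext (by rw [hg, Units.val_mul, huA, huB])
      obtain ⟨u1, ⟨d1, hd1⟩, h1⟩ := PA uA huA
      obtain ⟨u2, ⟨d2, hd2⟩, h2⟩ := PB uB huB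
      refine ⟨u1 * u2, ⟨fun x => d1 x * d2 x, ?_⟩, ?_⟩
      · rw [Units.val_mul, hd1, hd2, Matrix.diagonal_mul_diagonal]
      · rw [hguAB, _root_.map_mul ρ, h1, h2, _root_.map_mul ρ]
  intro g h
  obtain ⟨u, ⟨d, hd⟩, hu⟩ := key _ (detne g) g rfl
  obtain ⟨u', ⟨d', hd'⟩, hu'⟩ := key _ (detne h) h rfl
  have huu' : u * u' = u' * u := Units.ext (by
    rw [Units.val_mul, Units.val_mul, hd, hd', Matrix.diagonal_mul_diagonal,
      Matrix.diagonal_mul_diagonal]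
    exact congrArg Matrix.diagonal (funext fun x => mul_comm (d x) (d' x)))
  rw [hu, hu', ← _root_.map_mul ρ, huu', _root_.map_mul ρ]

/-- A nontrivial endomorphism of finite order `l` over `ℂ` has an eigenvalue which is a
nontrivial `l`-th root of unity. -/
private theorem exists_nontrivial_eigenvalue' {V : Type*} [AddCommGroup V] [Module ℂ V]
    [FiniteDimensional ℂ V] (u : Module.End ℂ V) (l : ℕ) (hl : 0 < l)
    (hul : u ^ l = 1) (hne : u ≠ 1) :
    ∃ (ζ : ℂ) (v : V), ζ ≠ 1 ∧ ζ ^ l = 1 ∧ v ≠ 0 ∧ u v = ζ • v := by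
  set W := LinearMap.range (u - 1) with hWdef
  have hW : ∀ x ∈ W, u x ∈ W := by
    rintro x ⟨y, rfl⟩
    exact ⟨u y, by simp [LinearMap.sub_apply, map_sub]⟩
  have hWne : W ≠ ⊥ := by
    intro h
    exact hne (by rw [← sub_eq_zero]; exact LinearMap.range_eq_bot.mp h)
  haveI : Nontrivial W := Submodule.nontrivial_iff_ne_bot.mpr hWne
  obtain ⟨ζ, hζ⟩ := Module.End.exists_eigenvalue (u.restrict hW)
  obtain ⟨w, hw⟩ := hζ.exists_hasEigenvector
  have hval : u (w : V) = ζ • (w : V) := by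
    have := congrArg Subtype.val hw.apply_eq_smul
    simpa [LinearMap.restrict_apply] using this
  have hw0 : (w : V) ≠ 0 := fun h => hw.2 (Submodule.coe_eq_zero.mp h)
  have hpow : ∀ k : ℕ, (u ^ k) (w : V) = ζ ^ k • (w : V) := by
    intro k
    induction k with
    | zero => simp
    | succ m ih =>
        rw [pow_succ, Module.End.mul_apply, hval, _root_.map_smul, ih, smul_smul, ← pow_succ']
  have hζl : ζ ^ l = 1 := by
    have h1 : (w : V) = ζ ^ l • (w : V) := by rw [← hpow l, hul]; rfl
    have h2 : (ζ ^ l - 1) • (w : V) = 0 := by rw [sub_smul, one_smul, ← h1, sub_self]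
    rcases smul_eq_zero.mp h2 with h | h
    · exact (sub_eq_zero.mp h)
    · exact absurd h hw0
  have hζ1 : ζ ≠ 1 := by
    intro hζeq
    obtain ⟨v, hv⟩ := w.2
    have huw : u (w : V) = (w : V) := by rw [hval, hζeq, one_smul]
    have hum : ∀ k : ℕ, (u ^ k) (w : V) = (w : V) := fun k => by
      rw [hpow, hζeq, one_pow, one_smul]
    have huv : u v = v + (w : V) := by
      have h' := hv
      simp only [LinearMap.sub_apply, Module.End.one_apply] at h'
      rw [← h']; abel
    have key : ∀ k : ℕ, (u ^ k) v = v + (k : ℂ) • (w : V) := by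
      intro k
      induction k with
      | zero => simp
      | succ m ih =>
          rw [pow_succ, Module.End.mul_apply, huv, map_add, ih, hum m]
          push_cast
          module
    have hlv : (u ^ l) v = v := by rw [hul]; rfl
    rw [key l] at hlv
    have hzero : ((l : ℂ)) • (w : V) = 0 := add_eq_left.mp hlv
    rcases smul_eq_zero.mp hzero with h | h
    · exact (Nat.cast_ne_zero.mpr hl.ne').elim (by exact_mod_cast h)
    · exact hw0 h
  exact ⟨ζ, w, hζ1, hζl, hw0, hval⟩

end Aux

/-- **Wong, Lemma 10 for `GL_n`.**  For every integer `n > 1` there is a constant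
`c₁(n) > 0` such that for every prime `l`, every finite-dimensional complex irreducible
representation of `GL_n(ℤ/lℤ)` with non-abelian image has degree `> c₁(n) · l`. -/
theorem min_degree_nonabelian_irrep_GL (n : ℕ) (hn : 1 < n) :
    ∃ c : ℝ, 0 < c ∧
      ∀ (l : ℕ), Nat.Prime l →
      ∀ (V : Type) [AddCommGroup V] [Module ℂ V] [FiniteDimensional ℂ V]
        (ρ : Representation ℂ (GL (Fin n) (ZMod l)) V),
        -- `ρ` is irreducible:
        (∀ W : Submodule ℂ V,
          (∀ (g : GL (Fin n) (ZMod l)), ∀ w ∈ W, ρ g w ∈ W) →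
          W = ⊥ ∨ W = ⊤) →
        -- the image of `ρ` is non-abelian:
        (∃ g h : GL (Fin n) (ZMod l), ρ g * ρ h ≠ ρ h * ρ g) →
        c * l < (Module.finrank ℂ V : ℝ) := by
  refine ⟨1/3, by norm_num, ?_⟩
  intro l hl V _ _ _ ρ _ hna
  haveI : Fact (Nat.Prime l) := ⟨hl⟩
  -- Step 1: find a transvection on which `ρ` is nontrivial.
  have htv : ∃ t : Matrix.TransvectionStruct (Fin n) (ZMod l), ∃ g : GL (Fin n) (ZMod l),
      (↑g : Matrix (Fin n) (Fin n) (ZMod l)) = t.toMatrix ∧ ρ g ≠ 1 := by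
    by_contra hcon
    push_neg at hcon
    obtain ⟨g, h, hgh⟩ := hna
    exact hgh (comm_of_transvection_trivial' ρ (fun t g hg => hcon t g hg) g h)
  obtain ⟨t, g, hgt, hgne⟩ := htv
  obtain ⟨i, j, hij, c⟩ := t
  rw [Matrix.TransvectionStruct.toMatrix_mk] at hgt
  set u : Module.End ℂ V := ρ g with hu
  -- basic facts about powers of `g`
  have hgpow : ∀ k : ℕ, (↑(g ^ k) : Matrix (Fin n) (Fin n) (ZMod l)) =
      Matrix.transvection i j ((k : ZMod l) * c) := by
    intro k
    rw [Units.val_pow_eq_pow_val, hgt, transvection_pow' i j hij, nsmul_eq_mul]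
  have hgl : g ^ l = 1 := by
    apply Units.ext
    rw [hgpow l, ZMod.natCast_self, zero_mul, Matrix.transvection_zero, Units.val_one]
  have hul : u ^ l = 1 := by
    rw [hu, ← map_pow ρ, hgl, _root_.map_one ρ]
  -- Step 2: find a nontrivial root-of-unity eigenvalue of `u = ρ g`.
  obtain ⟨ζ, v, hζ1, hζl, hv0, huv⟩ :=
    exists_nontrivial_eigenvalue' u l hl.pos hul hgne
  have hord : orderOf ζ = l := by
    have hdvd := orderOf_dvd_of_pow_eq_one hζl
    rcases hl.eq_one_or_self_of_dvd _ hdvd with h | h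
    · exact absurd (orderOf_eq_one_iff.mp h) hζ1
    · exact h
  have hprim : IsPrimitiveRoot ζ l := hord ▸ IsPrimitiveRoot.orderOf ζ
  have hupow : ∀ m : ℕ, (u ^ m) v = ζ ^ m • v := by
    intro m
    induction m with
    | zero => simp
    | succ k ih =>
        rw [pow_succ, Module.End.mul_apply, huv, _root_.map_smul, ih, smul_smul, ← pow_succ']
  -- Step 3: conjugating by diagonal matrices produces eigenvectors for all `ζ ^ (k+1)`.
  have hconj : ∀ k : Fin (l - 1), ∃ x : V, x ≠ 0 ∧ u x = ζ ^ (k.val + 1) • x := by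
    intro k
    have hk'l : k.val + 1 < l := by
      have := k.2
      omega
    set a : ZMod l := ((k.val + 1 : ℕ) : ZMod l) with hadef
    have ha : a ≠ 0 := by
      rw [hadef, Ne, ZMod.natCast_eq_zero_iff]
      exact Nat.not_dvd_of_pos_of_lt (Nat.succ_pos _) hk'l
    set D : GL (Fin n) (ZMod l) :=
      ⟨Matrix.diagonal (Function.update (fun _ => (1 : ZMod l)) i a),
       Matrix.diagonal (Function.update (fun _ => (1 : ZMod l)) i a⁻¹),
       diag_mul_diag_inv' i a ha,
       by
         have h' := diag_mul_diag_inv' i a⁻¹ (inv_ne_zero ha)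
         rwa [inv_inv] at h'⟩ with hDdef
    have hDg : g ^ (k.val + 1) = D * g * D⁻¹ := by
      apply Units.ext
      rw [hgpow (k.val + 1), Units.val_mul, Units.val_mul]
      have hDval : (↑D : Matrix (Fin n) (Fin n) (ZMod l)) =
          Matrix.diagonal (Function.update (fun _ => (1 : ZMod l)) i a) := rfl
      have hDinv : (↑(D⁻¹) : Matrix (Fin n) (Fin n) (ZMod l)) =
          Matrix.diagonal (Function.update (fun _ => (1 : ZMod l)) i a⁻¹) := rfl
      rw [hDval, hDinv, hgt, diag_conj_transvection' i j hij a c ha]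
    have h1 : ρ (D⁻¹) * ρ D = 1 := by
      rw [← _root_.map_mul ρ, inv_mul_cancel, _root_.map_one ρ]
    have h2 : u ^ (k.val + 1) = ρ D * u * ρ (D⁻¹) := by
      rw [hu, ← map_pow ρ, hDg, _root_.map_mul ρ, _root_.map_mul ρ]
    refine ⟨ρ (D⁻¹) v, ?_, ?_⟩
    · intro h
      apply hv0
      have : (ρ D * ρ (D⁻¹)) v = v := by
        rw [← _root_.map_mul ρ, mul_inv_cancel, _root_.map_one ρ]
        rfl
      rw [← this]
      show ρ D (ρ (D⁻¹) v) = 0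
      rw [h, map_zero]
    · have e1 : ρ (D⁻¹) * u ^ (k.val + 1) = u * ρ (D⁻¹) := by
        rw [h2, ← mul_assoc, ← mul_assoc, h1, one_mul]
      have := congrArg (fun f : Module.End ℂ V => f v) e1
      simp only [Module.End.mul_apply] at this
      rw [hupow (k.val + 1), _root_.map_smul] at this
      exact this.symm
  choose vec hvec0 hvec using hconj
  -- Step 4: these are `l - 1` eigenvectors with distinct eigenvalues.
  have hinj : Function.Injective (fun k : Fin (l - 1) => ζ ^ (k.val + 1)) := by
    intro a b hab
    have ha' : a.val + 1 < l := by have := a.2; omega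
    have hb' : b.val + 1 < l := by have := b.2; omega
    have := hprim.pow_inj ha' hb' hab
    exact Fin.ext (by omega)
  have hli : LinearIndependent ℂ vec := by
    refine Module.End.eigenvectors_linearIndependent' u
      (fun k : Fin (l - 1) => ζ ^ (k.val + 1)) hinj vec ?_
    intro k
    exact ⟨Module.End.mem_eigenspace_iff.mpr (hvec k), hvec0 k⟩
  have hcard : l - 1 ≤ Module.finrank ℂ V := by
    have := hli.fintype_card_le_finrank
    simpa using this
  -- Step 5: arithmetic.
  have hl2 : 2 ≤ l := hl.two_le
  have hreal : ((l : ℝ) - 1) ≤ (Module.finrank ℂ V : ℝ) := by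
    have h1 : ((l - 1 : ℕ) : ℝ) ≤ (Module.finrank ℂ V : ℝ) := Nat.cast_le.mpr hcard
    rwa [Nat.cast_sub (by omega), Nat.cast_one] at h1
  have hlr : (2 : ℝ) ≤ l := by exact_mod_cast hl2
  nlinarith
end

section
/- Fix integers m, N ≥ 1 and n ≥ 2. There exists a constant c_2(m, n, N) > 0 such that for every prime l > c_2(m, n, N), no subgroup of GL_N(ℂ) is isomorphic to SL_n(ℤ/l^m ℤ); equivalently, there is no injective group homomorphism SL_n(ℤ/l^m ℤ) → GL_N(ℂ). -/
open Matrix Polynomial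

section Aux
variable {R : Type*} [CommRing R] {n : Type*} [DecidableEq n] [Fintype n]

lemma my_transvection_pow {i j : n} (h : i ≠ j) (c : R) (k : ℕ) :
    (Matrix.transvection i j c) ^ k = Matrix.transvection i j (k • c) := by
  induction k with
  | zero => simp [Matrix.transvection_zero]
  | succ k ih =>
      rw [pow_succ, ih, Matrix.transvection_mul_transvection_same _ _ h, succ_nsmul]

omit [Fintype n] in
lemma my_transvection_entry {i j : n} (h : i ≠ j) (c : R) :
    Matrix.transvection i j c i j = c := by
  simp [Matrix.transvection, Matrix.add_apply, Matrix.one_apply, h]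

lemma my_diag_transvection_comm {i j : n} (h : i ≠ j) (a : Rˣ) (c : R) :
    Matrix.diagonal (fun x => if x = i then (a : R) else if x = j then ((a⁻¹ : Rˣ) : R) else 1)
        * Matrix.transvection i j c
      = Matrix.transvection i j ((a : R) * (a : R) * c)
        * Matrix.diagonal (fun x => if x = i then (a : R) else if x = j then ((a⁻¹ : Rˣ) : R) else 1) := by
  set d : n → R := fun x => if x = i then (a : R) else if x = j then ((a⁻¹ : Rˣ) : R) else 1 with hd
  ext p q
  rw [Matrix.diagonal_mul, Matrix.mul_diagonal]
  rcases eq_or_ne p q with rfl | hpq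
  · have hne : ¬(i = p ∧ j = p) := fun ⟨h1, h2⟩ => h (h1.trans h2.symm)
    simp only [Matrix.transvection, Matrix.add_apply,
      Matrix.single_apply_of_ne (h := hne), add_zero, mul_comm]
  · have h1 : (1 : Matrix n n R) p q = 0 := Matrix.one_apply_ne hpq
    by_cases hip : i = p ∧ j = q
    · obtain ⟨rfl, rfl⟩ := hip
      have hdi : d i = (a : R) := by simp [hd]
      have hdj : d j = ((a⁻¹ : Rˣ) : R) := by simp [hd, h.symm]
      simp only [Matrix.transvection, Matrix.add_apply, h1,
        Matrix.single_apply_same, zero_add, hdi, hdj]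
      rw [show (a : R) * (a : R) * c = ((a : R) * c) * (a : R) by ring,
        Units.mul_inv_cancel_right]
    · simp only [Matrix.transvection, Matrix.add_apply, h1,
        Matrix.single_apply_of_ne (h := hip), add_zero, zero_add, mul_zero, zero_mul]
end Aux

lemma my_eigen_conj_pow {V : Type*} [AddCommGroup V] [Module ℂ V]
    (f : Module.End ℂ V) (H : (Module.End ℂ V)ˣ) (k : ℕ)
    (rel : (H : Module.End ℂ V) * f * ((H⁻¹ : (Module.End ℂ V)ˣ) : Module.End ℂ V) = f ^ k)
    (μ : ℂ) (hv : ∃ v : V, v ≠ 0 ∧ f v = μ • v) :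
    ∃ w : V, w ≠ 0 ∧ f w = μ ^ k • w := by
  obtain ⟨v, hv0, hfv⟩ := hv
  have hpow : ∀ s : ℕ, (f ^ s) v = μ ^ s • v := by
    intro s
    induction s with
    | zero => simp
    | succ s ih =>
        rw [pow_succ, pow_succ, Module.End.mul_apply, hfv, LinearMap.map_smul, ih, smul_smul,
          mul_comm]
  refine ⟨((H⁻¹ : (Module.End ℂ V)ˣ) : Module.End ℂ V) v, ?_, ?_⟩
  · intro hw
    apply hv0
    have : (H : Module.End ℂ V) (((H⁻¹ : (Module.End ℂ V)ˣ) : Module.End ℂ V) v) = 0 := by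
      rw [hw]; simp
    rwa [← Module.End.mul_apply, H.mul_inv, Module.End.one_apply] at this
  · have h1 : (H : Module.End ℂ V) (f (((H⁻¹ : (Module.End ℂ V)ˣ) : Module.End ℂ V) v))
        = μ ^ k • v := by
      rw [← Module.End.mul_apply, ← Module.End.mul_apply, rel, hpow]
    have h2 : (H : Module.End ℂ V) (μ ^ k • ((H⁻¹ : (Module.End ℂ V)ˣ) : Module.End ℂ V) v)
        = μ ^ k • v := by
      rw [LinearMap.map_smul, ← Module.End.mul_apply, H.mul_inv, Module.End.one_apply]
    have h3 := h1.trans h2.symm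
    have hinj : Function.Injective (H : Module.End ℂ V) := by
      intro x y hxy
      have := congrArg ((H⁻¹ : (Module.End ℂ V)ˣ) : Module.End ℂ V) hxy
      rwa [← Module.End.mul_apply, ← Module.End.mul_apply, H.inv_mul, Module.End.one_apply,
        Module.End.one_apply] at this
    exact hinj h3

lemma my_exists_root_ne_one (p : ℂ[X]) (hmon : p.Monic) (hdeg : 0 < p.natDegree)
    (hsep : p.Separable) (hne : p ≠ X - C 1) :
    ∃ ζ : ℂ, p.IsRoot ζ ∧ ζ ≠ 1 := by
  by_contra hcon
  push_neg at hcon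
  have hroots : ∀ x ∈ p.roots, x = 1 := by
    intro x hx
    exact hcon x ((mem_roots hmon.ne_zero).1 hx)
  have hrepl : p.roots = Multiset.replicate p.roots.card 1 :=
    Multiset.eq_replicate_card.2 hroots
  have hsplit : p.Splits := IsAlgClosed.splits p
  have hprod := hsplit.eq_prod_roots_of_monic hmon
  rw [hrepl] at hprod
  simp only [Multiset.map_replicate, Multiset.prod_replicate] at hprod
  obtain ⟨k, hk⟩ : ∃ k, Multiset.card p.roots = k := ⟨_, rfl⟩
  rw [hk] at hprod
  rcases Nat.lt_or_ge k 2 with h2 | h2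
  · have hdd : p.natDegree = k := by
      rw [hprod, natDegree_pow, natDegree_X_sub_C, mul_one]
    have h1 : k = 1 := by omega
    rw [h1, pow_one] at hprod
    exact hne hprod
  · have : (X - C 1) * (X - C 1) ∣ p := by
      rw [hprod, ← pow_two]
      exact pow_dvd_pow _ h2
    have := hsep.squarefree _ this
    exact (Polynomial.not_isUnit_X_sub_C 1) this

lemma my_pow_eq_of_modEq (zz : ℂ) (l : ℕ) (hz : zz ^ l = 1) {a b : ℕ} (h : a ≡ b [MOD l]) :
    zz ^ a = zz ^ b := by
  have key : ∀ s : ℕ, zz ^ s = zz ^ (s % l) := by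
    intro s
    conv_lhs => rw [← Nat.div_add_mod s l]
    rw [pow_add, pow_mul, hz, one_pow, one_mul]
  rw [key a, key b, h]

/-- **Wong, Lemma 11 for `SL_n`.**  Fix integers `m, N ≥ 1` and `n ≥ 2`.  There is a
constant `c₂(m,n,N) > 0` such that for every prime `l > c₂(m,n,N)` no subgroup of
`GL_N(ℂ)` is isomorphic to `SL_n(ℤ/lᵐℤ)`, i.e. there is no injective group homomorphism
`SL_n(ℤ/lᵐℤ) → GL_N(ℂ)`. -/
theorem no_embedding_SL_mod_prime_power (m N n : ℕ) (hm : 1 ≤ m) (hN : 1 ≤ N) (hn : 2 ≤ n) :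
    ∃ c : ℕ, 0 < c ∧
      ∀ l : ℕ, Nat.Prime l → c < l →
        ¬ ∃ ψ : Matrix.SpecialLinearGroup (Fin n) (ZMod (l ^ m)) →* GL (Fin N) ℂ,
            Function.Injective ψ := by
  refine ⟨2 * N + 2, by positivity, ?_⟩
  rintro l hl hlc ⟨ψ, hψ⟩
  haveI : Fact l.Prime := ⟨hl⟩
  haveI : NeZero (l ^ m) := ⟨pow_ne_zero _ hl.pos.ne'⟩
  set R := ZMod (l ^ m) with hR
  -- the two indices
  have h0n : 0 < n := by omega
  have h1n : 1 < n := by omega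
  set i0 : Fin n := ⟨0, h0n⟩ with hi0
  set i1 : Fin n := ⟨1, h1n⟩ with hi1
  have h01 : i0 ≠ i1 := by simp [hi0, hi1, Fin.ext_iff]
  -- the unipotent element u of order l
  set c0 : R := ((l ^ (m - 1) : ℕ) : R) with hc0def
  have hc0 : c0 ≠ 0 := by
    rw [hc0def, Ne, ZMod.natCast_eq_zero_iff]
    intro hdvd
    have h1 := Nat.le_of_dvd (Nat.pow_pos hl.pos) hdvd
    have h2 : l ^ (m - 1) < l ^ m := Nat.pow_lt_pow_right hl.one_lt (by omega)
    omega
  set u : Matrix.SpecialLinearGroup (Fin n) R :=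
    ⟨Matrix.transvection i0 i1 c0, Matrix.det_transvection_of_ne _ _ h01 _⟩ with hu
  have hupow : ∀ k : ℕ, ((u ^ k : Matrix.SpecialLinearGroup (Fin n) R) : Matrix (Fin n) (Fin n) R)
      = Matrix.transvection i0 i1 (k • c0) := by
    intro k
    rw [Matrix.SpecialLinearGroup.coe_pow]
    exact my_transvection_pow h01 c0 k
  have hul : u ^ l = 1 := by
    apply Subtype.ext
    rw [hupow l]
    have : (l : ℕ) • c0 = 0 := by
      rw [nsmul_eq_mul, hc0def, ← Nat.cast_mul]
      have h3 : l * l ^ (m - 1) = l ^ m := by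
        rw [← pow_succ']
        congr 1
        omega
      rw [h3, ZMod.natCast_self]
    rw [this, Matrix.transvection_zero]
    rfl
  have hu1 : u ≠ 1 := by
    intro h
    apply hc0
    have h4 := congrArg
      (fun A : Matrix.SpecialLinearGroup (Fin n) R => (A : Matrix (Fin n) (Fin n) R) i0 i1) h
    simpa [hu, my_transvection_entry h01, Matrix.SpecialLinearGroup.coe_one,
      Matrix.one_apply_ne h01] using h4
  -- the diagonal elements
  have hdet : ∀ A : Rˣ,
      (Matrix.diagonal (fun x : Fin n =>
        if x = i0 then (A : R) else if x = i1 then ((A⁻¹ : Rˣ) : R) else 1)).det = 1 := by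
    intro A
    rw [Matrix.det_diagonal]
    have hsub : ({i0, i1} : Finset (Fin n)) ⊆ Finset.univ := Finset.subset_univ _
    rw [← Finset.prod_subset hsub (fun x _ hx => by
      simp only [Finset.mem_insert, Finset.mem_singleton, not_or] at hx
      simp [hx.1, hx.2])]
    rw [Finset.prod_pair h01]
    simp [h01, Ne.symm h01, Units.mul_inv]
  -- the GL → End map
  let Φ : GL (Fin N) ℂ →* (Module.End ℂ (Fin N → ℂ))ˣ :=
    Units.map (Matrix.toLinAlgEquiv' : Matrix (Fin N) (Fin N) ℂ ≃ₐ[ℂ]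
      Module.End ℂ (Fin N → ℂ)).toAlgHom.toRingHom.toMonoidHom
  have hΦinj : Function.Injective Φ := by
    intro x y hxy
    apply Units.ext
    apply Matrix.toLinAlgEquiv'.injective
    exact congrArg Units.val hxy
  set f : Module.End ℂ (Fin N → ℂ) := ((Φ (ψ u)) : Module.End ℂ (Fin N → ℂ)) with hf
  have hf_ne : f ≠ 1 := by
    intro h
    have h1 : Φ (ψ u) = 1 := Units.ext h
    have h2 : Φ (ψ 1) = 1 := by simp
    exact hu1 (hψ (hΦinj (h1.trans h2.symm)))
  have hf_pow : f ^ l = 1 := by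
    have h5 : ((Φ (ψ (u ^ l))) : Module.End ℂ (Fin N → ℂ)) = f ^ l := by
      rw [map_pow, map_pow, Units.val_pow_eq_pow_val, hf]
    rw [← h5, hul]
    simp
  -- minpoly facts
  haveI : Nonempty (Fin N) := ⟨⟨0, hN⟩⟩
  haveI : Nontrivial (Module.End ℂ (Fin N → ℂ)) := by
    obtain ⟨v, hv⟩ := exists_ne (0 : Fin N → ℂ)
    refine nontrivial_of_ne 0 1 fun h => hv ?_
    have := congrArg (fun g : Module.End ℂ (Fin N → ℂ) => g v) h.symm
    simpa using this
  have hint : IsIntegral ℂ f := IsIntegral.of_finite ℂ f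
  set p : ℂ[X] := minpoly ℂ f with hp
  have pm : p.Monic := minpoly.monic hint
  have hdvd : p ∣ X ^ l - C 1 := by
    apply minpoly.dvd
    rw [map_sub, aeval_X_pow, aeval_C, hf_pow, _root_.map_one, sub_self]
  have hsep : p.Separable := by
    refine Polynomial.Separable.of_dvd ?_ hdvd
    exact Polynomial.separable_X_pow_sub_C 1 (Nat.cast_ne_zero.2 hl.pos.ne') one_ne_zero
  have hdeg : 0 < p.natDegree := minpoly.natDegree_pos hint
  have hneq : p ≠ X - C 1 := by
    intro h
    apply hf_ne
    have h6 := minpoly.aeval ℂ f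
    rw [← hp, h, map_sub, aeval_X, aeval_C, _root_.map_one, sub_eq_zero] at h6
    exact h6
  obtain ⟨ζ, hζroot, hζ1⟩ := my_exists_root_ne_one p pm hdeg hsep hneq
  have hζl : ζ ^ l = 1 := by
    have h7 := hζroot.dvd hdvd
    have h8 : eval ζ (X ^ l - C 1) = 0 := h7
    rw [eval_sub, eval_pow, eval_X, eval_C, sub_eq_zero] at h8
    exact h8
  have hζunit : IsUnit ζ := IsUnit.of_pow_eq_one hζl hl.pos.ne'
  set ξ : ℂˣ := hζunit.unit with hξ
  have hξval : (ξ : ℂ) = ζ := hζunit.unit_spec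
  have horder : orderOf ξ = l := by
    apply orderOf_eq_prime
    · apply Units.ext
      rw [Units.val_pow_eq_pow_val, hξval, hζl, Units.val_one]
    · intro hcontra
      apply hζ1
      rw [← hξval, hcontra, Units.val_one]
  -- eigenvalue closure
  have hclosure : ∀ x : (ZMod l)ˣ,
      p.IsRoot (ζ ^ (((x : ZMod l)) ^ 2).val) := by
    intro x
    set b : ℕ := ((x : ZMod l)).val with hb
    have hbco : Nat.Coprime b l := ZMod.val_coe_unit_coprime x
    have hbcm : Nat.Coprime b (l ^ m) := hbco.pow_right m
    set A : Rˣ := ZMod.unitOfCoprime b hbcm with hA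
    set kA : ℕ := (((A : R) * (A : R)).val) with hkA
    -- conjugation relation in SL
    set t : Matrix.SpecialLinearGroup (Fin n) R :=
      ⟨Matrix.diagonal (fun x : Fin n =>
        if x = i0 then (A : R) else if x = i1 then ((A⁻¹ : Rˣ) : R) else 1), hdet A⟩ with ht
    have hcomm : t * u = u ^ kA * t := by
      apply Subtype.ext
      rw [Matrix.SpecialLinearGroup.coe_mul, Matrix.SpecialLinearGroup.coe_mul, hupow kA]
      have h9 : (kA : ℕ) • c0 = (A : R) * (A : R) * c0 := by
        rw [nsmul_eq_mul, hkA, ZMod.natCast_rightInverse _]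
      rw [h9]
      exact my_diag_transvection_comm h01 A c0
    have hconjSL : t * u * t⁻¹ = u ^ kA := by
      rw [hcomm, mul_assoc, mul_inv_cancel, mul_one]
    -- transport to units of End
    have hrel : ((Φ (ψ t)) : Module.End ℂ (Fin N → ℂ)) * f
        * (((Φ (ψ t))⁻¹ : (Module.End ℂ (Fin N → ℂ))ˣ) : Module.End ℂ (Fin N → ℂ)) = f ^ kA := by
      have e1 : Φ (ψ t) * Φ (ψ u) * (Φ (ψ t))⁻¹ = (Φ (ψ u)) ^ kA := by
        rw [← _root_.map_inv, ← _root_.map_inv, ← _root_.map_mul, ← _root_.map_mul, ← _root_.map_mul, ← _root_.map_mul, hconjSL,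
          map_pow, map_pow]
      have e2 := congrArg (Units.val) e1
      rw [Units.val_mul, Units.val_mul, Units.val_pow_eq_pow_val] at e2
      exact e2
    -- eigenvector for ζ
    have h1 : f.HasEigenvalue ζ := Module.End.hasEigenvalue_iff_isRoot.2 hζroot
    obtain ⟨v, hv⟩ := h1.exists_hasEigenvector
    have hveq : f v = ζ • v := Module.End.mem_eigenspace_iff.1 hv.1
    obtain ⟨w, hw0, hwf⟩ := my_eigen_conj_pow f (Φ (ψ t)) kA hrel ζ ⟨v, hv.2, hveq⟩
    have h2 : f.HasEigenvalue (ζ ^ kA) :=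
      Module.End.hasEigenvalue_of_hasEigenvector
        ⟨Module.End.mem_eigenspace_iff.2 hwf, hw0⟩
    have h3 : p.IsRoot (ζ ^ kA) := Module.End.hasEigenvalue_iff_isRoot.1 h2
    -- identify the exponent mod l
    have hmod : kA ≡ (((x : ZMod l)) ^ 2).val [MOD l] := by
      have hAb : (A : R) = (b : R) := ZMod.coe_unitOfCoprime b hbcm
      have e3 : kA = (b * b) % l ^ m := by
        rw [hkA, hAb, ← Nat.cast_mul, ZMod.val_natCast]
      have e4 : ((x : ZMod l)) ^ 2 = ((b * b : ℕ) : ZMod l) := by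
        rw [pow_two, Nat.cast_mul, hb, ZMod.natCast_rightInverse _]
      have e5 : (((x : ZMod l)) ^ 2).val = (b * b) % l := by
        rw [e4, ZMod.val_natCast]
      rw [e3, e5]
      unfold Nat.ModEq
      rw [Nat.mod_mod_of_dvd _ (dvd_pow_self l (by omega : m ≠ 0)),
        Nat.mod_mod_of_dvd _ (dvd_refl l)]
    have e6 : ζ ^ kA = ζ ^ (((x : ZMod l)) ^ 2).val := my_pow_eq_of_modEq ζ l hζl hmod
    rwa [e6] at h3
  -- counting
  set E : Finset ℂ := p.roots.toFinset with hE
  set F : (ZMod l)ˣ → ℂ := fun x => ζ ^ (((x : ZMod l)) ^ 2).val with hF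
  have himg : ∀ x : (ZMod l)ˣ, F x ∈ E := by
    intro x
    rw [hE, Multiset.mem_toFinset, mem_roots pm.ne_zero]
    exact hclosure x
  have hfib : ∀ a ∈ Finset.univ.image F, (Finset.univ.filter (fun x => F x = a)).card ≤ 2 := by
    intro a ha
    obtain ⟨x₀, -, hx₀⟩ := Finset.mem_image.1 ha
    have hsubf : Finset.univ.filter (fun x => F x = a) ⊆ {x₀, -x₀} := by
      intro y hy
      have hyeq : F y = F x₀ := by rw [(Finset.mem_filter.1 hy).2, hx₀]
      have hmod2 : (((y : ZMod l)) ^ 2).val ≡ (((x₀ : ZMod l)) ^ 2).val [MOD l] := by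
        have huniteq : ξ ^ (((y : ZMod l)) ^ 2).val = ξ ^ (((x₀ : ZMod l)) ^ 2).val := by
          apply Units.ext
          rw [Units.val_pow_eq_pow_val, Units.val_pow_eq_pow_val, hξval]
          exact hyeq
        have hcong := pow_eq_pow_iff_modEq.1 huniteq
        rwa [horder] at hcong
      have h6 : (((y : ZMod l)) ^ 2).val = (((x₀ : ZMod l)) ^ 2).val := by
        have l1 := ZMod.val_lt (((y : ZMod l)) ^ 2)
        have l2 := ZMod.val_lt (((x₀ : ZMod l)) ^ 2)
        unfold Nat.ModEq at hmod2
        rw [Nat.mod_eq_of_lt l1, Nat.mod_eq_of_lt l2] at hmod2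
        exact hmod2
      have h7 : ((y : ZMod l)) ^ 2 = ((x₀ : ZMod l)) ^ 2 := by
        have h8 := congrArg (Nat.cast : ℕ → ZMod l) h6
        rwa [ZMod.natCast_rightInverse _, ZMod.natCast_rightInverse _] at h8
      have h9 : ((y : ZMod l) - (x₀ : ZMod l)) * ((y : ZMod l) + (x₀ : ZMod l)) = 0 := by
        have : ((y : ZMod l)) ^ 2 - ((x₀ : ZMod l)) ^ 2 = 0 := by rw [h7, sub_self]
        calc ((y : ZMod l) - (x₀ : ZMod l)) * ((y : ZMod l) + (x₀ : ZMod l))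
            = ((y : ZMod l)) ^ 2 - ((x₀ : ZMod l)) ^ 2 := by ring
          _ = 0 := this
      simp only [Finset.mem_insert, Finset.mem_singleton]
      rcases mul_eq_zero.1 h9 with h10 | h10
      · left
        exact Units.ext (sub_eq_zero.1 h10)
      · right
        apply Units.ext
        rw [Units.val_neg]
        exact neg_eq_of_add_eq_zero_left h10 ▸ rfl
    calc (Finset.univ.filter (fun x => F x = a)).card ≤ ({x₀, -x₀} : Finset (ZMod l)ˣ).card :=
          Finset.card_le_card hsubf
      _ ≤ 2 := Finset.card_insert_le _ _ |>.trans (by simp)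
  have hcount := Finset.card_le_mul_card_image (Finset.univ : Finset (ZMod l)ˣ) 2 hfib
  have hcard_units : (Finset.univ : Finset (ZMod l)ˣ).card = l - 1 := by
    rw [Finset.card_univ, ZMod.card_units]
  have himg_sub : Finset.univ.image F ⊆ E := by
    intro a ha
    obtain ⟨x, -, rfl⟩ := Finset.mem_image.1 ha
    exact himg x
  have hEN : E.card ≤ N := by
    calc E.card ≤ Multiset.card p.roots := p.roots.toFinset_card_le
      _ ≤ p.natDegree := card_roots' p
      _ ≤ (LinearMap.charpoly f).natDegree := by
          apply natDegree_le_of_dvd (LinearMap.minpoly_dvd_charpoly f)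
          exact (LinearMap.charpoly_monic f).ne_zero
      _ = N := by rw [LinearMap.charpoly_natDegree, Module.finrank_fin_fun]
  have hfinal : l - 1 ≤ 2 * N := by
    calc l - 1 = (Finset.univ : Finset (ZMod l)ˣ).card := hcard_units.symm
      _ ≤ 2 * (Finset.univ.image F).card := hcount
      _ ≤ 2 * E.card := by
          apply Nat.mul_le_mul_left
          exact Finset.card_le_card himg_sub
      _ ≤ 2 * N := Nat.mul_le_mul_left _ hEN
  omega
end

section
/- Fix integers m, N ≥ 1 and n ≥ 2. There exists a constant c_2(m, n, N) > 0 such that for every prime l > c_2(m, n, N), no subgroup of GL_N(ℂ) is isomorphic to Sp_{2n}(ℤ/l^m ℤ); equivalently, there is no injective group homomorphism Sp_{2n}(ℤ/l^m ℤ) → GL_N(ℂ). -/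
open Matrix

open Polynomial in
private lemma linalg_contra (N q l m : ℕ) (hN : 1 ≤ N) (hl : l.Prime) (hNl : N < l) (hq : q = l ^ m)
    (a b c : GL (Fin N) ℂ)
    (hrel : c * b = a * (b * c))
    (hab : a * b = b * a) (hac : a * c = c * a)
    (haq : a ^ q = 1) (ha1 : a ≠ 1) : False := by
  have hq0 : q ≠ 0 := by simp [hq, hl.pos.ne']
  set V := Fin N → ℂ with hV
  let T : Matrix (Fin N) (Fin N) ℂ ≃ₐ[ℂ] Module.End ℂ V := Matrix.toLinAlgEquiv'
  let f : Module.End ℂ V := T (a : Matrix (Fin N) (Fin N) ℂ)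
  let g : Module.End ℂ V := T (b : Matrix (Fin N) (Fin N) ℂ)
  let h : Module.End ℂ V := T (c : Matrix (Fin N) (Fin N) ℂ)
  have hfq : f ^ q = 1 := by
    have h2 : ((a : Matrix (Fin N) (Fin N) ℂ)) ^ q = 1 := by
      rw [← Units.val_pow_eq_pow_val, haq, Units.val_one]
    rw [show f ^ q = T ((a : Matrix (Fin N) (Fin N) ℂ) ^ q) by simp [f, map_pow], h2,
      _root_.map_one]
  have hf1 : f ≠ 1 := by
    intro hEq
    apply ha1
    apply Units.ext
    have := T.injective (hEq.trans (_root_.map_one T).symm)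
    simpa using this
  haveI : Nonempty (Fin N) := ⟨⟨0, hN⟩⟩
  -- minpoly analysis
  have hsat : (Polynomial.aeval f) (X ^ q - 1 : ℂ[X]) = 0 := by
    simp [hfq]
  have hint : IsIntegral ℂ f := ⟨X ^ q - 1, by simpa using monic_X_pow_sub_C (1:ℂ) hq0, hsat⟩
  have hdvd : minpoly ℂ f ∣ X ^ q - 1 := minpoly.dvd ℂ f hsat
  have hsep : Squarefree (X ^ q - 1 : ℂ[X]) := by
    have := Polynomial.separable_X_pow_sub_C (1:ℂ) (by exact_mod_cast hq0) one_ne_zero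
    simpa using this.squarefree
  have hmonic : (minpoly ℂ f).Monic := minpoly.monic hint
  -- find root ζ ≠ 1
  have hzeta : ∃ ζ : ℂ, (minpoly ℂ f).IsRoot ζ ∧ ζ ≠ 1 := by
    by_contra hcon
    push_neg at hcon
    have hsplit : (minpoly ℂ f).Splits := IsAlgClosed.splits _
    have hprod := hsplit.eq_prod_roots_of_monic hmonic
    have hroots1 : ∀ z ∈ (minpoly ℂ f).roots, z = 1 := by
      intro z hz
      exact hcon z (isRoot_of_mem_roots hz)
    have hdeg : 0 < (minpoly ℂ f).natDegree := minpoly.natDegree_pos hint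
    have hcard : (minpoly ℂ f).roots.card = (minpoly ℂ f).natDegree := by
      have := Polynomial.Splits.natDegree_eq_card_roots hsplit
      simpa using this.symm
    have hrepl : (minpoly ℂ f).roots = Multiset.replicate (minpoly ℂ f).natDegree 1 := by
      rw [← hcard]
      exact Multiset.eq_replicate_card.mpr hroots1
    rw [hrepl] at hprod
    simp only [Multiset.map_replicate, Multiset.prod_replicate] at hprod
    -- minpoly = (X - 1) ^ natDegree
    have hk := hdeg
    rcases Nat.lt_or_ge (minpoly ℂ f).natDegree 2 with h2 | h2
    · -- natDegree = 1, minpoly = X - 1, so f = 1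
      have hd1 : (minpoly ℂ f).natDegree = 1 := by omega
      rw [hd1, pow_one] at hprod
      have haev := minpoly.aeval ℂ f
      rw [hprod] at haev
      simp only [map_sub, aeval_X, aeval_C, _root_.map_one] at haev
      exact hf1 (by rwa [sub_eq_zero] at haev)
    · -- (X-1)^2 divides X^q - 1: contradict squarefree
      have hdvd2 : (X - C (1:ℂ)) * (X - C 1) ∣ X ^ q - 1 := by
        refine dvd_trans ?_ hdvd
        rw [hprod, ← pow_two]
        exact pow_dvd_pow _ h2
      exact Polynomial.not_isUnit_X_sub_C _ (hsep _ hdvd2)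
  obtain ⟨ζ, hζroot, hζ1⟩ := hzeta
  have hζq : ζ ^ q = 1 := by
    have := hζroot.dvd hdvd
    simp only [IsRoot, eval_sub, eval_pow, eval_X, eval_one] at this
    exact sub_eq_zero.mp this
  have hev : Module.End.HasEigenvalue f ζ := Module.End.hasEigenvalue_iff_isRoot.mpr hζroot
  set E := Module.End.eigenspace f ζ with hEdef
  have hEne : E ≠ ⊥ := hev
  -- relations at the End level
  have hfg : f * g = g * f := by
    have h2 := congrArg Units.val hab
    simp only [Units.val_mul] at h2
    have h3 := congrArg T h2
    rw [_root_.map_mul, _root_.map_mul] at h3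
    exact h3
  have hfh : f * h = h * f := by
    have h2 := congrArg Units.val hac
    simp only [Units.val_mul] at h2
    have h3 := congrArg T h2
    rw [_root_.map_mul, _root_.map_mul] at h3
    exact h3
  have hrel' : h * g = f * (g * h) := by
    have h2 := congrArg Units.val hrel
    simp only [Units.val_mul] at h2
    have h3 := congrArg T h2
    rw [_root_.map_mul, _root_.map_mul, _root_.map_mul] at h3
    exact h3
  have hgmap : ∀ x ∈ E, g x ∈ E := by
    intro x hx
    rw [hEdef, Module.End.mem_eigenspace_iff] at hx ⊢
    have h3 := congrArg (fun φ : Module.End ℂ V => φ x) hfg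
    simp only [Module.End.mul_apply] at h3
    rw [h3, hx]
    exact g.map_smul ζ x
  have hhmap : ∀ x ∈ E, h x ∈ E := by
    intro x hx
    rw [hEdef, Module.End.mem_eigenspace_iff] at hx ⊢
    have h3 := congrArg (fun φ : Module.End ℂ V => φ x) hfh
    simp only [Module.End.mul_apply] at h3
    rw [h3, hx]
    exact h.map_smul ζ x
  let g' : E →ₗ[ℂ] E := g.restrict hgmap
  let h' : E →ₗ[ℂ] E := h.restrict hhmap
  set d := Module.finrank ℂ E with hd
  have hrestr : h' ∘ₗ g' = ζ • (g' ∘ₗ h') := by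
    apply LinearMap.ext
    intro x
    apply Subtype.ext
    simp only [LinearMap.comp_apply, LinearMap.smul_apply, Submodule.coe_smul,
      LinearMap.restrict_coe_apply, g', h']
    have h3 := congrArg (fun φ : Module.End ℂ V => φ (x : V)) hrel'
    simp only [Module.End.mul_apply] at h3
    have hgh : g (h (x : V)) ∈ E := hgmap _ (hhmap _ x.2)
    have hgh2 : f (g (h (x : V))) = ζ • g (h (x : V)) := Module.End.mem_eigenspace_iff.mp hgh
    exact h3.trans hgh2
  have hdet : LinearMap.det h' * LinearMap.det g' = ζ ^ d * (LinearMap.det g' * LinearMap.det h') := by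
    have h4 : LinearMap.det (h' ∘ₗ g') = LinearMap.det (ζ • (g' ∘ₗ h')) := by rw [hrestr]
    rwa [LinearMap.det_smul, LinearMap.det_comp, LinearMap.det_comp] at h4
  -- injectivity of g and h
  have hinj : ∀ u : GL (Fin N) ℂ, Function.Injective (T (u : Matrix (Fin N) (Fin N) ℂ)) := by
    intro u x y hxy
    have hleft : T ((u⁻¹ : GL (Fin N) ℂ) : Matrix (Fin N) (Fin N) ℂ) *
        T (u : Matrix (Fin N) (Fin N) ℂ) = 1 := by
      rw [← _root_.map_mul]
      have h9 : ((u⁻¹ : GL (Fin N) ℂ) : Matrix (Fin N) (Fin N) ℂ) *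
          (u : Matrix (Fin N) (Fin N) ℂ) = 1 := by
        rw [← Units.val_mul, inv_mul_cancel, Units.val_one]
      rw [h9, _root_.map_one]
    calc x = (T ((u⁻¹ : GL (Fin N) ℂ) : Matrix (Fin N) (Fin N) ℂ) *
        T (u : Matrix (Fin N) (Fin N) ℂ)) x := by rw [hleft]; rfl
    _ = (T ((u⁻¹ : GL (Fin N) ℂ) : Matrix (Fin N) (Fin N) ℂ) *
        T (u : Matrix (Fin N) (Fin N) ℂ)) y := by
        simp only [Module.End.mul_apply]; rw [hxy]
    _ = y := by rw [hleft]; rfl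
  have hdetg : LinearMap.det g' ≠ 0 := by
    intro h0
    obtain ⟨x, hxker, hx0⟩ := SetLike.exists_of_lt (LinearMap.bot_lt_ker_of_det_eq_zero h0)
    apply hx0
    rw [Submodule.mem_bot]
    rw [LinearMap.mem_ker] at hxker
    have : (g' x : V) = 0 := by rw [hxker]; rfl
    rw [LinearMap.restrict_coe_apply] at this
    apply Subtype.ext
    exact hinj b (by simpa using this)
  have hdeth : LinearMap.det h' ≠ 0 := by
    intro h0
    obtain ⟨x, hxker, hx0⟩ := SetLike.exists_of_lt (LinearMap.bot_lt_ker_of_det_eq_zero h0)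
    apply hx0
    rw [Submodule.mem_bot]
    rw [LinearMap.mem_ker] at hxker
    have : (h' x : V) = 0 := by rw [hxker]; rfl
    rw [LinearMap.restrict_coe_apply] at this
    apply Subtype.ext
    exact hinj c (by simpa using this)
  have hzd : ζ ^ d = 1 := by
    have h2 : (ζ ^ d - 1) * (LinearMap.det g' * LinearMap.det h') = 0 := by
      linear_combination -hdet
    rcases mul_eq_zero.mp h2 with h3 | h3
    · exact sub_eq_zero.mp h3
    · exact absurd h3 (mul_ne_zero hdetg hdeth)
  -- finrank bounds
  haveI : Nontrivial E := Submodule.nontrivial_iff_ne_bot.mpr hEne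
  have hdpos : 0 < d := Module.finrank_pos
  have hdle : d ≤ N := by
    have h5 : d ≤ Module.finrank ℂ V := Submodule.finrank_le E
    rwa [show Module.finrank ℂ V = N from Module.finrank_fin_fun ℂ] at h5
  -- orderOf argument
  have hordq : orderOf ζ ∣ q := orderOf_dvd_of_pow_eq_one hζq
  have hordd : orderOf ζ ∣ d := orderOf_dvd_of_pow_eq_one hzd
  rw [hq] at hordq
  obtain ⟨k, hkle, hkeq⟩ := (Nat.dvd_prime_pow hl).mp hordq
  have hne1 : orderOf ζ ≠ 1 := fun h1 => hζ1 (orderOf_eq_one_iff.mp h1)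
  have hk0 : k ≠ 0 := by
    rintro rfl
    rw [pow_zero] at hkeq
    exact hne1 hkeq
  have hldvd : l ∣ d := dvd_trans (hkeq ▸ dvd_pow_self l hk0) hordd
  have := Nat.le_of_dvd hdpos hldvd
  omega

private lemma stdBasis_transpose {n : ℕ} {R : Type*} [CommRing R] (i j : Fin n) (c : R) :
    (Matrix.single i j c)ᵀ = Matrix.single j i c := by
  ext a b
  simp [Matrix.single, Matrix.transpose_apply, and_comm]

private lemma sp_elements {n : ℕ} (R : Type*) [CommRing R] {i j : Fin n} (hij : i ≠ j) :
    ∃ g h cM : Matrix (Fin n ⊕ Fin n) (Fin n ⊕ Fin n) R,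
      g ∈ Matrix.symplecticGroup (Fin n) R ∧ h ∈ Matrix.symplecticGroup (Fin n) R ∧
      cM ∈ Matrix.symplecticGroup (Fin n) R ∧
      h * g = cM * (g * h) ∧ cM * g = g * cM ∧ cM * h = h * cM ∧
      (∀ k : ℕ, cM ^ k = 1 + (k : R) • fromBlocks 0 (Matrix.single i i (2:R)) 0 0) ∧
      cM (Sum.inl i) (Sum.inr i) = 2 := by
  have hji := Ne.symm hij
  set S : Matrix (Fin n) (Fin n) R := Matrix.single i j 1 + Matrix.single j i 1 with hS
  set A : Matrix (Fin n) (Fin n) R := 1 + Matrix.single i j 1 with hA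
  set B : Matrix (Fin n) (Fin n) R := 1 - Matrix.single j i 1 with hB
  set U : Matrix (Fin n) (Fin n) R := Matrix.single i i (2:R) with hU
  have mul_ji_ji : Matrix.single j i (1:R) * Matrix.single j i 1 = 0 :=
    Matrix.single_mul_single_of_ne _ _ _ _ hij _
  have mul_ij_ij : Matrix.single i j (1:R) * Matrix.single i j 1 = 0 :=
    Matrix.single_mul_single_of_ne _ _ _ _ hji _
  have mul_ij_ji : Matrix.single i j (1:R) * Matrix.single j i 1 = Matrix.single i i 1 := by
    rw [Matrix.single_mul_single_same, one_mul]
  have mul_ii_ji : Matrix.single i i (2:R) * Matrix.single j i 1 = 0 :=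
    Matrix.single_mul_single_of_ne _ _ _ _ hij _
  have mul_ij_ii : Matrix.single i j (1:R) * Matrix.single i i 2 = 0 :=
    Matrix.single_mul_single_of_ne _ _ _ _ hji _
  have two_split : Matrix.single i i (2:R) = Matrix.single i i 1 + Matrix.single i i 1 := by
    ext a b
    by_cases h1 : i = a ∧ i = b
    · obtain ⟨rfl, rfl⟩ := h1
      simp
      ring
    · rw [Matrix.add_apply, Matrix.single_apply_of_ne i i (2:R) a b h1,
        Matrix.single_apply_of_ne i i (1:R) a b h1, add_zero]
  have hSt : Sᵀ = S := by
    rw [hS, Matrix.transpose_add, stdBasis_transpose, stdBasis_transpose, add_comm]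
  have hUt : Uᵀ = U := by rw [hU, stdBasis_transpose]
  have hABt : A * Bᵀ = 1 := by
    rw [hA, hB, Matrix.transpose_sub, Matrix.transpose_one, stdBasis_transpose]
    rw [Matrix.add_mul, Matrix.one_mul, Matrix.mul_sub, Matrix.mul_one, mul_ij_ij]
    abel
  have hBAt : B * Aᵀ = 1 := by
    rw [hA, hB, Matrix.transpose_add, Matrix.transpose_one, stdBasis_transpose]
    rw [Matrix.sub_mul, Matrix.one_mul, Matrix.mul_add, Matrix.mul_one, mul_ji_ji]
    abel
  have hAS : A * S = (U + S) * B := by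
    rw [hA, hS, hB, hU]
    rw [Matrix.add_mul, Matrix.one_mul, Matrix.mul_add, mul_ij_ij, mul_ij_ji]
    rw [Matrix.add_mul, Matrix.add_mul, Matrix.mul_sub, Matrix.mul_sub, Matrix.mul_sub,
      Matrix.mul_one, Matrix.mul_one, Matrix.mul_one, mul_ii_ji, mul_ij_ji, mul_ji_ji,
      two_split]
    abel
  have hAU : A * U = U * B := by
    rw [hA, hB, hU]
    rw [Matrix.add_mul, Matrix.one_mul, Matrix.mul_sub, Matrix.mul_one, mul_ij_ii, mul_ii_ji]
    abel
  refine ⟨fromBlocks 1 S 0 1, fromBlocks A 0 0 B, fromBlocks 1 U 0 1, ?_, ?_, ?_, ?_, ?_, ?_, ?_, ?_⟩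
  · rw [SymplecticGroup.mem_iff, Matrix.J, fromBlocks_transpose, fromBlocks_multiply,
      fromBlocks_multiply]
    simp [hSt]
  · rw [SymplecticGroup.mem_iff, Matrix.J, fromBlocks_transpose, fromBlocks_multiply,
      fromBlocks_multiply]
    simp [hABt, hBAt]
  · rw [SymplecticGroup.mem_iff, Matrix.J, fromBlocks_transpose, fromBlocks_multiply,
      fromBlocks_multiply]
    simp [hUt]
  · rw [fromBlocks_multiply, fromBlocks_multiply, fromBlocks_multiply]
    simp [hAS, Matrix.add_mul]
    rw [add_comm]
  · rw [fromBlocks_multiply, fromBlocks_multiply]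
    simp [add_comm U S]
  · rw [fromBlocks_multiply, fromBlocks_multiply]
    simp [hAU]
  · intro k
    induction k with
    | zero => simp
    | succ k ih =>
      rw [pow_succ, ih]
      rw [Matrix.add_mul, Matrix.one_mul, Matrix.smul_mul, fromBlocks_multiply]
      simp only [Matrix.zero_mul, Matrix.mul_zero, Matrix.mul_one, Matrix.one_mul,
        add_zero, zero_add, ← hU]
      have hsplit1 : (fromBlocks 1 U 0 1 : Matrix (Fin n ⊕ Fin n) (Fin n ⊕ Fin n) R) =
          1 + fromBlocks 0 U 0 0 := by
        rw [← fromBlocks_one, fromBlocks_add]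
        simp
      rw [hsplit1]
      push_cast
      rw [add_smul, one_smul]
      abel
  · rw [hU]
    simp [Matrix.fromBlocks_apply₁₂]

/-- **Wong, Lemma 11 for `Sp_{2n}`.**  Fix integers `m, N ≥ 1` and `n ≥ 2`.  There is a
constant `c₂(m,n,N) > 0` such that for every prime `l > c₂(m,n,N)` no subgroup of
`GL_N(ℂ)` is isomorphic to `Sp_{2n}(ℤ/lᵐℤ)`, i.e. there is no injective group homomorphism
`Sp_{2n}(ℤ/lᵐℤ) → GL_N(ℂ)`. -/
theorem no_embedding_Sp_mod_prime_power (m N n : ℕ) (hm : 1 ≤ m) (hN : 1 ≤ N) (hn : 2 ≤ n) :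
    ∃ c : ℕ, 0 < c ∧
      ∀ l : ℕ, Nat.Prime l → c < l →
        ¬ ∃ ψ : Matrix.symplecticGroup (Fin n) (ZMod (l ^ m)) →* GL (Fin N) ℂ,
            Function.Injective ψ := by
  refine ⟨N + 1, by omega, ?_⟩
  intro l hl hcl
  rintro ⟨ψ, hψ⟩
  have hl2 : 2 < l := by omega
  have hlm : 2 < l ^ m := lt_of_lt_of_le hl2 (Nat.le_self_pow (by omega) l)
  have hij : (⟨0, by omega⟩ : Fin n) ≠ ⟨1, by omega⟩ := by
    intro hEq
    simpa using congrArg Fin.val hEq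
  obtain ⟨g, h, cM, hg, hh, hc, hrel, hcg, hch, hpow, hentry⟩ :=
    sp_elements (ZMod (l ^ m)) hij
  let G : Matrix.symplecticGroup (Fin n) (ZMod (l ^ m)) := ⟨g, hg⟩
  let H : Matrix.symplecticGroup (Fin n) (ZMod (l ^ m)) := ⟨h, hh⟩
  let Cc : Matrix.symplecticGroup (Fin n) (ZMod (l ^ m)) := ⟨cM, hc⟩
  have hrelS : H * G = Cc * (G * H) := Subtype.ext (by
    simp only [Submonoid.coe_mul]
    exact hrel)
  have hcgS : Cc * G = G * Cc := Subtype.ext (by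
    simp only [Submonoid.coe_mul]
    exact hcg)
  have hchS : Cc * H = H * Cc := Subtype.ext (by
    simp only [Submonoid.coe_mul]
    exact hch)
  have hCpow : Cc ^ (l ^ m) = 1 := by
    apply Subtype.ext
    rw [SubmonoidClass.coe_pow, OneMemClass.coe_one, hpow (l ^ m)]
    rw [ZMod.natCast_self (l ^ m), zero_smul, add_zero]
  have hC1 : Cc ≠ 1 := by
    intro hEq
    have h2 : cM = 1 := congrArg Subtype.val hEq
    rw [h2] at hentry
    have h3 : (1 : Matrix (Fin n ⊕ Fin n) (Fin n ⊕ Fin n) (ZMod (l ^ m)))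
        (Sum.inl ⟨0, by omega⟩) (Sum.inr ⟨0, by omega⟩) = 0 := by
      apply Matrix.one_apply_ne
      simp
    rw [h3] at hentry
    have h4 : ((2 : ℕ) : ZMod (l ^ m)) = 0 := by exact_mod_cast hentry.symm
    rw [ZMod.natCast_eq_zero_iff] at h4
    have := Nat.le_of_dvd (by norm_num) h4
    omega
  refine linalg_contra N (l ^ m) l m hN hl (by omega) rfl (ψ Cc) (ψ G) (ψ H) ?_ ?_ ?_ ?_ ?_
  · rw [← ψ.map_mul, ← ψ.map_mul, ← ψ.map_mul, ← hrelS]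
  · rw [← ψ.map_mul, ← ψ.map_mul, hcgS]
  · rw [← ψ.map_mul, ← ψ.map_mul, hchS]
  · rw [← ψ.map_pow, hCpow, ψ.map_one]
  · intro hEq
    apply hC1
    apply hψ
    rw [hEq, ψ.map_one]
end

section
/- Fix integers m, N ≥ 1 and n ≥ 2. There exists a constant c_2(m, n, N) > 0 such that for every prime l > c_2(m, n, N), no subgroup of GL_N(ℂ) is isomorphic to GL_n(ℤ/l^m ℤ); equivalently, there is no injective group homomorphism GL_n(ℤ/l^m ℤ) → GL_N(ℂ). -/
open Matrix Polynomial

/-- If `v` is an eigenvector of `a` with eigenvalue `μ`, then for any polynomial `q`,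
`v` is an eigenvector of `aeval a q` with eigenvalue `q.eval μ`. -/
lemma aux_aeval_mulVec {N : ℕ} (a : Matrix (Fin N) (Fin N) ℂ) {μ : ℂ} {v : Fin N → ℂ}
    (h : a *ᵥ v = μ • v) (q : ℂ[X]) : (aeval a q) *ᵥ v = q.eval μ • v := by
  have hpow : ∀ k : ℕ, a ^ k *ᵥ v = μ ^ k • v := by
    intro k
    induction k with
    | zero => simp [Matrix.one_mulVec]
    | succ k ih =>
      rw [pow_succ, ← Matrix.mulVec_mulVec, h, Matrix.mulVec_smul, ih, smul_smul, mul_comm,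
        ← pow_succ]
  induction q using Polynomial.induction_on' with
  | add p q hp hq => rw [map_add, Matrix.add_mulVec, hp, hq, eval_add, add_smul]
  | monomial k c =>
    rw [aeval_monomial, eval_monomial, Algebra.algebraMap_eq_smul_one, smul_mul_assoc,
      one_mul, Matrix.smul_mulVec, hpow, smul_smul]

/-- A root of the minimal polynomial of a complex matrix is an eigenvalue. -/
lemma aux_root_eig {N : ℕ} (hN : 1 ≤ N) (a : Matrix (Fin N) (Fin N) ℂ) {ζ : ℂ}
    (hroot : (minpoly ℂ a).IsRoot ζ) : ∃ v : Fin N → ℂ, v ≠ 0 ∧ a *ᵥ v = ζ • v := by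
  haveI : NeZero N := ⟨by omega⟩
  have hint : IsIntegral ℂ a := Matrix.isIntegral a
  have hpne : minpoly ℂ a ≠ 0 := minpoly.ne_zero hint
  obtain ⟨q, hq⟩ : (X - C ζ) ∣ minpoly ℂ a := dvd_iff_isRoot.mpr hroot
  have hq0 : q ≠ 0 := by rintro rfl; rw [mul_zero] at hq; exact hpne hq
  have haq : aeval a q ≠ 0 := by
    intro h0
    have hdeg : (minpoly ℂ a).degree ≤ q.degree := minpoly.degree_le_of_ne_zero ℂ a hq0 h0
    have hdeg' : (minpoly ℂ a).natDegree ≤ q.natDegree := natDegree_le_natDegree hdeg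
    have hXne : (X - C ζ : ℂ[X]) ≠ 0 := X_sub_C_ne_zero ζ
    have heq : (minpoly ℂ a).natDegree = 1 + q.natDegree := by
      rw [hq, natDegree_mul hXne hq0, natDegree_X_sub_C]
    omega
  -- find a nonzero column of `aeval a q`
  obtain ⟨i, j, hij⟩ : ∃ i j, (aeval a q) i j ≠ 0 := by
    by_contra hc
    push_neg at hc
    exact haq (by ext i j; simpa using hc i j)
  refine ⟨(aeval a q) *ᵥ Pi.single j 1, ?_, ?_⟩
  · intro h0
    have := congrFun h0 i
    rw [Matrix.mulVec_single_one] at this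
    simp only [mul_one, Pi.zero_apply] at this
    exact hij this
  · have hmul : (a - ζ • 1) * aeval a q = 0 := by
      have := minpoly.aeval ℂ a
      rw [hq, _root_.map_mul] at this
      have hX : aeval a (X - C ζ) = a - ζ • (1 : Matrix (Fin N) (Fin N) ℂ) := by
        rw [map_sub, aeval_X, aeval_C, Algebra.algebraMap_eq_smul_one]
      rwa [hX] at this
    have h2 : (a - ζ • 1) *ᵥ ((aeval a q) *ᵥ Pi.single j 1) = 0 := by
      rw [Matrix.mulVec_mulVec, hmul, Matrix.zero_mulVec]
    rw [Matrix.sub_mulVec, Matrix.smul_mulVec, Matrix.one_mulVec, sub_eq_zero] at h2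
    exact h2

/-- **Wong, Lemma 11 for `GL_n`.**  Fix integers `m, N ≥ 1` and `n ≥ 2`.  There is a
constant `c₂(m,n,N) > 0` such that for every prime `l > c₂(m,n,N)` no subgroup of
`GL_N(ℂ)` is isomorphic to `GL_n(ℤ/lᵐℤ)`, i.e. there is no injective group homomorphism
`GL_n(ℤ/lᵐℤ) → GL_N(ℂ)`. -/
theorem no_embedding_GL_mod_prime_power (m N n : ℕ) (hm : 1 ≤ m) (hN : 1 ≤ N) (hn : 2 ≤ n) :
    ∃ c : ℕ, 0 < c ∧
      ∀ l : ℕ, Nat.Prime l → c < l →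
        ¬ ∃ ψ : GL (Fin n) (ZMod (l ^ m)) →* GL (Fin N) ℂ,
            Function.Injective ψ := by
  refine ⟨N + 1, by omega, ?_⟩
  intro l hl hcl ⟨ψ, hψ⟩
  haveI : Fact l.Prime := ⟨hl⟩
  haveI : NeZero n := ⟨by omega⟩
  have hl2 : 2 ≤ l := hl.two_le
  -- indices 0 ≠ 1 in Fin n
  have hn1 : ((1 : Fin n) : ℕ) = 1 := by
    rw [Fin.val_one']
    exact Nat.mod_eq_of_lt (by omega)
  have h01 : (0 : Fin n) ≠ 1 := by
    intro h
    have h' := congrArg Fin.val h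
    rw [Fin.val_zero, hn1] at h'
    exact one_ne_zero h'.symm
  -- the nilpotent matrix E
  have hpR : ((l ^ (m - 1) : ℕ) : ZMod (l ^ m)) ≠ 0 := by
    rw [Ne, ZMod.natCast_eq_zero_iff]
    intro hdvd
    have h1 : l ^ (m - 1) < l ^ m :=
      Nat.pow_lt_pow_right hl.one_lt (Nat.sub_lt (by omega) Nat.one_pos)
    have h2 : 0 < l ^ (m - 1) := Nat.pow_pos (by omega)
    exact absurd (Nat.le_of_dvd h2 hdvd) (not_le.mpr h1)
  set E : Matrix (Fin n) (Fin n) (ZMod (l ^ m)) := Matrix.single 0 1 ((l ^ (m - 1) : ℕ) : ZMod (l ^ m)) with hE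
  have hEE : E * E = 0 := by
    rw [hE]; exact Matrix.single_mul_single_of_ne (h := Ne.symm h01) ..
  -- the unipotent element U
  set U : GL (Fin n) (ZMod (l ^ m)) :=
    ⟨1 + E, 1 - E, by rw [mul_one_sub, one_add_mul, hEE, add_zero]; abel,
      by rw [one_sub_mul, mul_one_add, hEE, add_zero]; abel⟩ with hU
  have hUpow : ∀ k : ℕ, ((U ^ k : GL (Fin n) (ZMod (l ^ m))) : Matrix (Fin n) (Fin n) (ZMod (l ^ m)))
      = 1 + (k : ZMod (l ^ m)) • E := by
    intro k
    induction k with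
    | zero => simp
    | succ k ih =>
      rw [pow_succ, Units.val_mul, ih]
      show (1 + (k : ZMod (l ^ m)) • E) * (1 + E) = _
      rw [mul_one_add, add_mul, one_mul, smul_mul_assoc, hEE, smul_zero, add_zero]
      push_cast
      rw [add_smul, one_smul]
      abel
  have hUl : U ^ l = 1 := by
    ext1
    rw [hUpow l, Units.val_one]
    have : (l : ZMod (l ^ m)) • E = 0 := by
      rw [hE, Matrix.smul_single, smul_eq_mul, ← Nat.cast_mul]
      have hlp : l * l ^ (m - 1) = l ^ m := by
        rw [← pow_succ']
        congr 1
        omega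
      rw [hlp, ZMod.natCast_self, Matrix.single_zero]
    rw [this, add_zero]
  have hUne : U ≠ 1 := by
    intro h
    have h1 : ((U : Matrix (Fin n) (Fin n) (ZMod (l ^ m)))) = 1 := by rw [h, Units.val_one]
    have h2 : (1 : Matrix (Fin n) (Fin n) (ZMod (l ^ m))) + E = 1 := h1
    have hE0 : E = 0 := by
      have := congrArg (· - (1 : Matrix (Fin n) (Fin n) (ZMod (l ^ m)))) h2
      simpa using this
    have := congrFun (congrFun hE0 0) 1
    rw [hE] at this
    simp only [Matrix.single_apply_same, Matrix.zero_apply] at this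
    exact hpR this
  -- a primitive root g
  obtain ⟨g₀, hg₀⟩ := IsCyclic.exists_generator (α := (ZMod l)ˣ)
  have hord₀ : orderOf g₀ = l - 1 := by
    rw [orderOf_eq_card_of_forall_mem_zpowers hg₀, Nat.card_eq_fintype_card, ZMod.card_units]
  set g : ℕ := ((g₀ : ZMod l)).val with hg
  have hgcast : ((g : ℕ) : ZMod l) = (g₀ : ZMod l) := by
    rw [hg, ZMod.natCast_val, ZMod.cast_id]
  have hgco : Nat.Coprime g (l ^ m) := by
    apply Nat.Coprime.pow_right
    rw [Nat.coprime_comm, Nat.Prime.coprime_iff_not_dvd hl]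
    intro hdvd
    have h0 : ((g : ℕ) : ZMod l) = 0 := (ZMod.natCast_eq_zero_iff _ _).mpr hdvd
    rw [hgcast] at h0
    exact g₀.ne_zero h0
  haveI : NeZero l := ⟨hl.pos.ne'⟩
  set w : (ZMod (l ^ m))ˣ := ZMod.unitOfCoprime g hgco with hwdef
  have hw : (w : ZMod (l ^ m)) = (g : ZMod (l ^ m)) := ZMod.coe_unitOfCoprime _ _
  set d : Fin n → ZMod (l ^ m) := fun i => if i = 0 then (w : ZMod (l ^ m)) else 1 with hd
  set d' : Fin n → ZMod (l ^ m) := fun i => if i = 0 then ((w⁻¹ : (ZMod (l ^ m))ˣ) : ZMod (l ^ m)) else 1 with hd'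
  have hdd' : Matrix.diagonal d * Matrix.diagonal d' = 1 := by
    rw [Matrix.diagonal_mul_diagonal]
    have hfun : (fun i => d i * d' i) = fun _ => (1 : ZMod (l ^ m)) := by
      funext i
      rw [hd, hd']
      by_cases h : i = 0
      · simp only [h, if_pos rfl]
        exact w.mul_inv
      · simp only [if_neg h, one_mul]
    rw [hfun, Matrix.diagonal_one]
  have hd'd : Matrix.diagonal d' * Matrix.diagonal d = 1 := by
    rw [Matrix.diagonal_mul_diagonal]
    have hfun : (fun i => d' i * d i) = fun _ => (1 : ZMod (l ^ m)) := by
      funext i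
      rw [hd, hd']
      by_cases h : i = 0
      · simp only [h, if_pos rfl]
        exact w.inv_mul
      · simp only [if_neg h, one_mul]
    rw [hfun, Matrix.diagonal_one]
  set T : GL (Fin n) (ZMod (l ^ m)) := ⟨Matrix.diagonal d, Matrix.diagonal d', hdd', hd'd⟩ with hT
  have hTUT : T * U * T⁻¹ = U ^ g := by
    ext1
    rw [Units.val_mul, Units.val_mul, hUpow g]
    show Matrix.diagonal d * (1 + E) * ((T⁻¹ : GL (Fin n) (ZMod (l ^ m))) : Matrix (Fin n) (Fin n) (ZMod (l ^ m)))
        = 1 + (g : ZMod (l ^ m)) • E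
    have hTinv : ((T⁻¹ : GL (Fin n) (ZMod (l ^ m))) : Matrix (Fin n) (Fin n) (ZMod (l ^ m))) = Matrix.diagonal d' := rfl
    rw [hTinv, mul_one_add, add_mul, hdd']
    congr 1
    ext i j
    rw [Matrix.mul_diagonal, Matrix.diagonal_mul, hE, Matrix.smul_single]
    by_cases hij : (0 : Fin n) = i ∧ (1 : Fin n) = j
    · obtain ⟨rfl, rfl⟩ := hij
      rw [Matrix.single_apply_same, Matrix.single_apply_same]
      have h10 : (1 : Fin n) ≠ 0 := fun h => h01 h.symm
      have hd0 : d 0 = (w : ZMod (l ^ m)) := by simp [hd]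
      have hd'1 : d' 1 = 1 := by simp [hd', h10]
      rw [hd0, hd'1, hw, mul_one, smul_eq_mul, mul_comm]
    · rw [Matrix.single_apply_of_ne (h := hij), Matrix.single_apply_of_ne (h := hij),
        mul_zero, zero_mul]
  -- push through ψ
  set A : GL (Fin N) ℂ := ψ U with hA
  set B : GL (Fin N) ℂ := ψ T with hB
  have hAl : A ^ l = 1 := by rw [hA, ← _root_.map_pow, hUl, _root_.map_one]
  have hAne : A ≠ 1 := by
    intro h
    rw [hA] at h
    exact hUne (hψ (h.trans (_root_.map_one ψ).symm))
  have hconj : B * A * B⁻¹ = A ^ g := by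
    rw [hA, hB, ← _root_.map_pow, ← hTUT, _root_.map_mul, _root_.map_mul, map_inv]
  set a : Matrix (Fin N) (Fin N) ℂ := (A : Matrix (Fin N) (Fin N) ℂ) with ha
  set b : Matrix (Fin N) (Fin N) ℂ := (B : Matrix (Fin N) (Fin N) ℂ) with hb
  set b' : Matrix (Fin N) (Fin N) ℂ := ((B⁻¹ : GL (Fin N) ℂ) : Matrix (Fin N) (Fin N) ℂ) with hb'
  have hbb' : b * b' = 1 := by
    rw [hb, hb', ← Units.val_mul, mul_inv_cancel, Units.val_one]
  have hb'b : b' * b = 1 := by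
    rw [hb, hb', ← Units.val_mul, inv_mul_cancel, Units.val_one]
  have hal : a ^ l = 1 := by rw [ha, ← Units.val_pow_eq_pow_val, hAl, Units.val_one]
  have hane : a ≠ 1 := fun h => hAne (Units.ext h)
  have hconjM : b * a * b' = a ^ g := by
    have := congrArg (Units.val) hconj
    rw [Units.val_mul, Units.val_mul, Units.val_pow_eq_pow_val] at this
    exact this
  have hab' : a * b' = b' * a ^ g := by
    calc a * b' = (b' * b) * (a * b') := by rw [hb'b, one_mul]
      _ = b' * (b * a * b') := by noncomm_ring
      _ = b' * a ^ g := by rw [hconjM]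
  -- eigenvalue step
  have hstep : ∀ μ : ℂ, (∃ v, v ≠ 0 ∧ a *ᵥ v = μ • v) →
      ∃ v, v ≠ 0 ∧ a *ᵥ v = (μ ^ g) • v := by
    rintro μ ⟨v, hv, hav⟩
    have hpowv : a ^ g *ᵥ v = μ ^ g • v := by
      have := aux_aeval_mulVec a hav (X ^ g)
      rwa [map_pow, aeval_X, eval_pow, eval_X] at this
    refine ⟨b' *ᵥ v, ?_, ?_⟩
    · intro h0
      have : b *ᵥ (b' *ᵥ v) = 0 := by rw [h0, Matrix.mulVec_zero]
      rw [Matrix.mulVec_mulVec, hbb', Matrix.one_mulVec] at this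
      exact hv this
    · rw [Matrix.mulVec_mulVec, hab', ← Matrix.mulVec_mulVec, hpowv, Matrix.mulVec_smul]
  -- eigenvalues are roots of the minimal polynomial
  haveI : NeZero N := ⟨by omega⟩
  have hint : IsIntegral ℂ a := Matrix.isIntegral a
  have hPne : minpoly ℂ a ≠ 0 := minpoly.ne_zero hint
  have heigroot : ∀ μ : ℂ, (∃ v, v ≠ 0 ∧ a *ᵥ v = μ • v) → (minpoly ℂ a).IsRoot μ := by
    rintro μ ⟨v, hv, hav⟩
    have h1 := aux_aeval_mulVec a hav (minpoly ℂ a)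
    rw [minpoly.aeval, Matrix.zero_mulVec] at h1
    have h2 : (minpoly ℂ a).eval μ = 0 ∨ v = 0 := smul_eq_zero.mp h1.symm
    exact h2.resolve_right hv
  -- the minimal polynomial divides X^l - 1 and is separable
  have hdvd : minpoly ℂ a ∣ (X ^ l - C 1 : ℂ[X]) := by
    apply minpoly.dvd
    rw [_root_.map_sub, _root_.map_pow, aeval_X, hal]
    simp
  have hsep : (X ^ l - C 1 : ℂ[X]).Separable :=
    Polynomial.separable_X_pow_sub_C 1 (by exact_mod_cast hl.pos.ne') one_ne_zero
  have hPsep : (minpoly ℂ a).Separable := hsep.of_dvd hdvd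
  have hPmonic : (minpoly ℂ a).Monic := minpoly.monic hint
  have hsplit : (minpoly ℂ a).Splits := IsAlgClosed.splits _
  -- find a root different from 1
  have hζex : ∃ ζ ∈ (minpoly ℂ a).roots, ζ ≠ 1 := by
    by_contra hc
    push_neg at hc
    have hrepl : (minpoly ℂ a).roots = Multiset.replicate (minpoly ℂ a).roots.card 1 :=
      Multiset.eq_replicate.mpr ⟨rfl, hc⟩
    have hprod := hsplit.eq_prod_roots_of_monic hPmonic
    rw [hrepl, Multiset.map_replicate, Multiset.prod_replicate] at hprod
    set k := (minpoly ℂ a).roots.card with hk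
    have hk0 : k ≠ 0 := by
      intro h
      rw [h, pow_zero] at hprod
      have := minpoly.natDegree_pos hint
      rw [hprod] at this
      simp at this
    have hk1 : k = 1 := by
      by_contra hk1
      have hk2 : 2 ≤ k := by omega
      have hsq : (X - C (1:ℂ)) * (X - C 1) ∣ (minpoly ℂ a) := by
        rw [hprod, ← sq]
        exact pow_dvd_pow _ hk2
      exact Polynomial.not_isUnit_X_sub_C 1 (hPsep.squarefree _ hsq)
    rw [hk1, pow_one] at hprod
    have := minpoly.aeval ℂ a
    rw [hprod, _root_.map_sub, aeval_X, aeval_C, Algebra.algebraMap_eq_smul_one, one_smul,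
      sub_eq_zero] at this
    exact hane this
  obtain ⟨ζ, hζmem, hζne⟩ := hζex
  have hζroot : (minpoly ℂ a).IsRoot ζ := Polynomial.isRoot_of_mem_roots hζmem
  have hζl : ζ ^ l = 1 := by
    obtain ⟨q, hq⟩ := hdvd
    have := congrArg (Polynomial.eval ζ) hq
    rw [eval_sub, eval_pow, eval_X, eval_C, eval_mul] at this
    rw [hζroot] at this
    rw [zero_mul] at this
    linear_combination this
  have hζ0 : ζ ≠ 0 := by
    intro h
    rw [h, zero_pow hl.pos.ne'] at hζl
    exact zero_ne_one hζl
  set ζu : ℂˣ := Units.mk0 ζ hζ0 with hζu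
  have hζuval : (ζu : ℂ) = ζ := rfl
  have hζul : ζu ^ l = 1 := by
    apply Units.ext
    rw [Units.val_pow_eq_pow_val, hζuval, hζl, Units.val_one]
  have hζune : ζu ≠ 1 := by
    intro h
    apply hζne
    have := congrArg Units.val h
    rwa [hζuval, Units.val_one] at this
  have hordζ : orderOf ζu = l := orderOf_eq_prime hζul hζune
  -- all iterates ζ^(g^k) are eigenvalues, hence roots
  have hiter : ∀ k : ℕ, ∃ v, v ≠ 0 ∧ a *ᵥ v = (ζ ^ (g ^ k)) • v := by
    intro k
    induction k with
    | zero =>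
      rw [pow_zero, pow_one]
      exact aux_root_eig hN a hζroot
    | succ k ih =>
      have : ζ ^ g ^ (k + 1) = (ζ ^ g ^ k) ^ g := by
        rw [← pow_mul, ← pow_succ]
      rw [this]
      exact hstep _ ih
  -- the iterates are pairwise distinct for k < l - 1
  have hordg : orderOf g₀ = l - 1 := hord₀
  set F : Fin (l - 1) → ℂ := fun k => ζ ^ (g ^ (k : ℕ)) with hF
  have hFinj : Function.Injective F := by
    intro i j hij
    have hij' : ζ ^ (g ^ (i : ℕ)) = ζ ^ (g ^ (j : ℕ)) := hij
    have hiju : ζu ^ (g ^ (i : ℕ)) = ζu ^ (g ^ (j : ℕ)) := by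
      apply Units.ext
      rw [Units.val_pow_eq_pow_val, Units.val_pow_eq_pow_val, hζuval]
      exact hij'
    have h1 : g ^ (i : ℕ) ≡ g ^ (j : ℕ) [MOD l] := by
      have := (pow_eq_pow_iff_modEq).mp hiju
      rwa [hordζ] at this
    have h2 : ((g : ZMod l)) ^ (i : ℕ) = ((g : ZMod l)) ^ (j : ℕ) := by
      have := (ZMod.natCast_eq_natCast_iff _ _ _).mpr h1
      push_cast at this
      exact this
    rw [hgcast] at h2
    have h3 : g₀ ^ (i : ℕ) = g₀ ^ (j : ℕ) := by
      apply Units.ext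
      rw [Units.val_pow_eq_pow_val, Units.val_pow_eq_pow_val]
      exact h2
    have h4 : (i : ℕ) ≡ (j : ℕ) [MOD l - 1] := by
      have := (pow_eq_pow_iff_modEq).mp h3
      rwa [hordg] at this
    have h5 : (i : ℕ) % (l - 1) = (j : ℕ) % (l - 1) := h4
    rw [Nat.mod_eq_of_lt i.isLt, Nat.mod_eq_of_lt j.isLt] at h5
    exact Fin.ext h5
  -- counting roots
  have hsub : Finset.image F Finset.univ ⊆ (minpoly ℂ a).roots.toFinset := by
    intro x hx
    rw [Finset.mem_image] at hx
    obtain ⟨k, _, rfl⟩ := hx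
    rw [Multiset.mem_toFinset, Polynomial.mem_roots hPne]
    exact heigroot _ (hiter (k : ℕ))
  have hcard1 : (Finset.image F Finset.univ).card = l - 1 := by
    rw [Finset.card_image_of_injective _ hFinj, Finset.card_univ, Fintype.card_fin]
  have hcard2 : (minpoly ℂ a).roots.toFinset.card ≤ N := by
    calc (minpoly ℂ a).roots.toFinset.card ≤ Multiset.card (minpoly ℂ a).roots :=
          Multiset.toFinset_card_le _
      _ ≤ (minpoly ℂ a).natDegree := Polynomial.card_roots' _
      _ ≤ (Matrix.charpoly a).natDegree := Polynomial.natDegree_le_of_dvd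
          (Matrix.minpoly_dvd_charpoly a) (Matrix.charpoly_monic a).ne_zero
      _ = N := by rw [Matrix.charpoly_natDegree_eq_dim, Fintype.card_fin]
  have hle : l - 1 ≤ N := by
    rw [← hcard1]
    exact le_trans (Finset.card_le_card hsub) hcard2
  omega
end

section
/- Let l > 3 be a prime, let n ≥ 2 and N ≥ 1 be integers, let 𝒪 and 𝒪' be the rings of integers of finite extensions of ℚ_l, and let λ be the maximal ideal of 𝒪. For i ≥ 1 let G_i denote the kernel of the reduction map GL_N(𝒪) → GL_N(𝒪/λ^i). Then for every abstract (not assumed continuous) group homomorphism φ: SL_n(𝒪') → GL_N(𝒪) and every i ≥ 1, the subgroup φ^{-1}(G_i) has finite index in SL_n(𝒪'). -/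
open Matrix

/-- Reduction of `GL (Fin N) O` modulo an ideal `I`, i.e. the homomorphism
`GL_N(O) → GL_N(O/I)` induced by the quotient map. -/
noncomputable def glReduction {O : Type*} [CommRing O] (N : ℕ) (I : Ideal O) :
    GL (Fin N) O →* GL (Fin N) (O ⧸ I) :=
  Matrix.GeneralLinearGroup.map (Ideal.Quotient.mk I)

/-- The level-`i` principal congruence subgroup `G_i` of `GL_N(O)`: the kernel of the
reduction map `GL_N(O) → GL_N(O/λ^i)`. -/
noncomputable def glCongruence {O : Type*} [CommRing O] (N : ℕ) (I : Ideal O) (i : ℕ) :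
    Subgroup (GL (Fin N) O) :=
  (glReduction N (I ^ i)).ker

section Aux

variable (l : ℕ) [Fact (Nat.Prime l)] (K : Type) [Field K]
    [Algebra ℚ_[l] K] [FiniteDimensional ℚ_[l] K]
    [Algebra ℤ_[l] K] [IsScalarTower ℤ_[l] ℚ_[l] K]

/-- The ring of integers is module-finite over `ℤ_l`. -/
lemma auxModuleFinite : Module.Finite ℤ_[l] ↥(integralClosure ℤ_[l] K) :=
  IsIntegralClosure.finite ℤ_[l] ℚ_[l] K ↥(integralClosure ℤ_[l] K)

/-- `l` is not a unit in the ring of integers. -/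
lemma aux_not_isUnit : ¬ IsUnit ((l : ℕ) : ↥(integralClosure ℤ_[l] K)) := by
  set O := ↥(integralClosure ℤ_[l] K)
  intro h
  obtain ⟨u, hu⟩ := h
  -- the inverse of `l` in the integral closure
  have hinv : ((u⁻¹ : Oˣ) : O) * ((l : ℕ) : O) = 1 := by
    rw [← hu]; exact u.inv_mul
  have hl0 : ((l : ℕ) : ℚ_[l]) ≠ 0 := by
    exact_mod_cast (Fact.out : Nat.Prime l).ne_zero
  -- push to `K`
  have hK : (((u⁻¹ : Oˣ) : O) : K) * ((l : ℕ) : K) = 1 := by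
    have h1 := congrArg (Subalgebra.val (integralClosure ℤ_[l] K)) hinv
    rw [_root_.map_mul, _root_.map_one, map_natCast] at h1
    exact h1
  -- `(u⁻¹ : K)` is the image of `(l : ℚ_[l])⁻¹`
  have hval : (((u⁻¹ : Oˣ) : O) : K) = algebraMap ℚ_[l] K (((l : ℕ) : ℚ_[l]))⁻¹ := by
    rw [map_inv₀, map_natCast]
    exact eq_inv_of_mul_eq_one_left hK
  -- integrality transfers down
  have hint : IsIntegral ℤ_[l] ((((l : ℕ) : ℚ_[l]))⁻¹) := by
    have h1 : IsIntegral ℤ_[l] ((((u⁻¹ : Oˣ) : O)) : K) := ((u⁻¹ : Oˣ) : O).2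
    rw [hval] at h1
    exact (isIntegral_algebraMap_iff ((algebraMap ℚ_[l] K).injective)).mp h1
  obtain ⟨y, hy⟩ := IsIntegrallyClosed.isIntegral_iff.mp hint
  -- then `l` would be a unit in `ℤ_l`
  have hunit : IsUnit ((l : ℕ) : ℤ_[l]) := by
    refine IsUnit.of_mul_eq_one y ?_
    apply IsFractionRing.injective ℤ_[l] ℚ_[l]
    rw [_root_.map_mul, hy, map_natCast, _root_.map_one, mul_inv_cancel₀ hl0]
  have h1 : ‖((l : ℕ) : ℤ_[l])‖ = 1 := PadicInt.isUnit_iff.mp hunit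
  have hlt : ‖((l : ℕ) : ℤ_[l])‖ < 1 := by
    rw [show ((l : ℕ) : ℤ_[l]) = (l : ℤ_[l]) from rfl, PadicInt.norm_p]
    exact inv_lt_one_of_one_lt₀ (by exact_mod_cast (Fact.out : Nat.Prime l).one_lt)
  rw [h1] at hlt
  exact absurd hlt (lt_irrefl 1)

set_option synthInstance.maxHeartbeats 800000 in
set_option maxHeartbeats 1000000 in
/-- Quotients by ideals containing a power of `l` are finite. -/
lemma auxFiniteQuotient (I : Ideal ↥(integralClosure ℤ_[l] K)) (i : ℕ)
    (hI : ((l : ℕ) : ↥(integralClosure ℤ_[l] K)) ^ i ∈ I) :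
    Finite (↥(integralClosure ℤ_[l] K) ⧸ I) := by
  set O := ↥(integralClosure ℤ_[l] K)
  haveI : Module.Finite ℤ_[l] O := auxModuleFinite l K
  obtain ⟨s, hs⟩ := Module.Finite.fg_top (R := ℤ_[l]) (M := O)
  let mkl : O →ₗ[ℤ_[l]] (O ⧸ I) := (Ideal.Quotient.mkₐ ℤ_[l] I).toLinearMap
  let g : ({x // x ∈ s} → ZMod (l ^ i)) → (O ⧸ I) :=
    fun c => ∑ x ∈ s.attach, (((c x).val : ℤ_[l]) • mkl x)
  have hg : Function.Surjective g := by
    intro m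
    obtain ⟨y, rfl⟩ := Ideal.Quotient.mk_surjective m
    have hy : y ∈ Submodule.span ℤ_[l] (s : Set O) := hs ▸ Submodule.mem_top
    obtain ⟨f, -, hf⟩ := Submodule.mem_span_finset.mp hy
    refine ⟨fun x => PadicInt.toZModPow i (f x), ?_⟩
    have hmk : Ideal.Quotient.mk I y = mkl y := rfl
    rw [hmk, ← hf, map_sum, ← Finset.sum_attach s (fun x => mkl (f x • x))]
    refine Finset.sum_congr rfl fun x _ => ?_
    rw [_root_.map_smul]
    -- goal: `(val of toZModPow (f x) : ℤ_[l]) • mkl x = f x • mkl x`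
    have hker : (f (x : O) - (((PadicInt.toZModPow i (f x)).val : ℕ) : ℤ_[l])) ∈
        RingHom.ker (PadicInt.toZModPow (p := l) i) := by
      rw [RingHom.mem_ker, map_sub, map_natCast, ZMod.natCast_val, ZMod.cast_id', id_eq,
        sub_self]
    rw [PadicInt.ker_toZModPow] at hker
    obtain ⟨c, hc⟩ := Ideal.mem_span_singleton'.mp hker
    have hzero : (f (x : O) - (((PadicInt.toZModPow i (f x)).val : ℕ) : ℤ_[l])) • mkl x = 0 := by
      rw [← hc, ← _root_.map_smul mkl]
      have h2 : (c * ((l : ℕ) : ℤ_[l]) ^ i) • ((x : O) : O) =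
          (algebraMap ℤ_[l] O c) * (((l : ℕ) : O) ^ i * (x : O)) := by
        rw [Algebra.smul_def]
        push_cast
        ring
      show Ideal.Quotient.mk I ((c * ((l : ℕ) : ℤ_[l]) ^ i) • ((x : O) : O)) = 0
      rw [h2, Ideal.Quotient.eq_zero_iff_mem]
      exact Ideal.mul_mem_left _ _ (Ideal.mul_mem_right _ _ hI)
    rw [sub_smul] at hzero
    exact (sub_eq_zero.mp hzero).symm
  exact Finite.of_surjective g hg

end Aux

set_option synthInstance.maxHeartbeats 800000 in
set_option maxHeartbeats 1000000 in
/-- **Wong, Lemma 13.**  Let `l > 3` be a prime, `n ≥ 2`, `N ≥ 1`, and let `𝒪, 𝒪'` be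
the rings of integers of finite extensions `K, K'` of `ℚ_l` (realized as the integral
closure of `ℤ_l` in the extension, a local ring with maximal ideal `λ`).  For every
abstract (not assumed continuous) group homomorphism `φ : SL_n(𝒪') → GL_N(𝒪)` and every
`i ≥ 1`, the preimage `φ⁻¹(G_i)` of the `i`-th principal congruence subgroup
`G_i = ker(GL_N(𝒪) → GL_N(𝒪/λ^i))` has finite index in `SL_n(𝒪')`. -/
theorem preimage_congruence_finiteIndex
    (l : ℕ) [Fact (Nat.Prime l)] (hl : 3 < l) (n N : ℕ) (hn : 2 ≤ n) (hN : 1 ≤ N)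
    (K K' : Type) [Field K] [Field K']
    [Algebra ℚ_[l] K] [Algebra ℚ_[l] K']
    [FiniteDimensional ℚ_[l] K] [FiniteDimensional ℚ_[l] K']
    [Algebra ℤ_[l] K] [Algebra ℤ_[l] K']
    [IsScalarTower ℤ_[l] ℚ_[l] K] [IsScalarTower ℤ_[l] ℚ_[l] K']
    [IsLocalRing ↥(integralClosure ℤ_[l] K)]
    (φ : Matrix.SpecialLinearGroup (Fin n) ↥(integralClosure ℤ_[l] K') →*
          GL (Fin N) ↥(integralClosure ℤ_[l] K))
    (i : ℕ) (hi : 1 ≤ i) :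
    ((glCongruence N (IsLocalRing.maximalIdeal ↥(integralClosure ℤ_[l] K)) i).comap
        φ).FiniteIndex := by
  set O := ↥(integralClosure ℤ_[l] K)
  set lamI := IsLocalRing.maximalIdeal O
  have hlmem : ((l : ℕ) : O) ∈ lamI := by
    rw [IsLocalRing.mem_maximalIdeal, mem_nonunits_iff]
    exact aux_not_isUnit l K
  have hpow : ((l : ℕ) : O) ^ i ∈ lamI ^ i := Ideal.pow_mem_pow hlmem i
  haveI : Finite (O ⧸ lamI ^ i) := auxFiniteQuotient l K (lamI ^ i) i hpow
  haveI : Finite (Matrix (Fin N) (Fin N) (O ⧸ lamI ^ i)) := by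
    unfold Matrix; infer_instance
  haveI : Finite (GL (Fin N) (O ⧸ lamI ^ i)) := inferInstance
  rw [glCongruence, MonoidHom.comap_ker]
  exact Subgroup.finiteIndex_ker _
end
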